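/- arXiv:2003.10393 — 9 statements merged into one kernel-verified Lean document; each statement's English description precedes it below -/
import Mathlib

section
/- Let r ≥ 2 be an integer and c > 0 a real. For every integer k ≥ r, the hitting probability satisfies 0 < q_k(c) < 1; that is, the walk started at k reaches 0 with positive probability, and with positive probability it never reaches 0. -/
/-!
Started at `k`, the walk is at `0` at time `k` as soon as `ξ₁ = ⋯ = ξₖ = 0`, an event of positive
probability. Conversely, if `ξⱼ ≥ 1` for every `j ≥ r`, the walk never drops more than `r - 1`
below its starting point, so from `k ≥ r` it stays positive. The events `{ξⱼ = 0}`, `j ≥ r`, are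
independent, each has probability `exp (-C(j-1, r-1) cʳ) < 1`, and these probabilities are summable
because `C(j-1, r-1) ≥ j - r + 1` when `r ≥ 2`. Hence with positive probability none of them
occurs: a finite block of them is avoided with positive probability by the product formula, the
remaining tail with probability at least `1 - ∑ (tail) > 0` by the union bound, and the block and
the tail are independent.
-/

open MeasureTheory ProbabilityTheory Finset
open scoped NNReal ENNReal

theorem Nat.add_one_le_choose_add {m : ℕ} (hm : 1 ≤ m) (n : ℕ) : n + 1 ≤ n.choose m + m := by
  induction n generalizing m with
  | zero => omega
  | succ n ih =>
    obtain ⟨m, rfl⟩ : ∃ m', m = m' + 1 := ⟨m - 1, by omega⟩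
    rw [Nat.choose_succ_succ']
    rcases le_or_gt m n with hmn | hnm
    · have := Nat.choose_pos hmn
      have := ih hm
      omega
    · omega

theorem summable_exp_neg_choose_mul {r : ℕ} (hr : 2 ≤ r) {a : ℝ} (ha : 0 < a) :
    Summable fun j : ℕ => Real.exp (-((j - 1).choose (r - 1) * a)) := by
  refine .of_nonneg_of_le (fun _ => (Real.exp_pos _).le) (fun j => ?_)
    ((summable_geometric_of_lt_one (Real.exp_pos (-a)).le
      (Real.exp_lt_one_iff.2 (by linarith))).mul_left (Real.exp ((r - 1) * a)))
  have hchoose : j + 1 ≤ (j - 1).choose (r - 1) + r := by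
    rcases j with _ | j
    · omega
    · have := Nat.add_one_le_choose_add (by omega : 1 ≤ r - 1) j
      simp only [Nat.add_sub_cancel]
      omega
  have hchoose' : (j : ℝ) + 1 ≤ (j - 1).choose (r - 1) + r := by exact_mod_cast hchoose
  rw [← Real.exp_nat_mul, ← Real.exp_add, Real.exp_le_exp]
  nlinarith

def WalkHitsZero (k : ℕ) (x : ℕ → ℕ) : Prop :=
  ∃ ℓ ≥ 1, (k : ℤ) + ∑ j ∈ Icc 1 ℓ, ((x j : ℤ) - 1) ≤ 0

theorem walkHitsZero_of_forall_eq_zero {k : ℕ} {x : ℕ → ℕ} (hk : 1 ≤ k)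
    (hx : ∀ j ∈ Icc 1 k, x j = 0) : WalkHitsZero k x := by
  refine ⟨k, hk, ?_⟩
  rw [sum_congr rfl fun j hj => by rw [hx j hj]]
  simp

theorem neg_min_le_sum_Icc_sub_one {x : ℕ → ℕ} {n : ℕ} (hx : ∀ j, n < j → x j ≠ 0) (ℓ : ℕ) :
    -(min ℓ n : ℤ) ≤ ∑ j ∈ Icc 1 ℓ, ((x j : ℤ) - 1) := by
  induction ℓ with
  | zero => simp
  | succ ℓ ih =>
    rw [sum_Icc_succ_top (by omega)]
    have := hx (ℓ + 1)
    omega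

theorem not_walkHitsZero_of_forall_ne_zero {k n : ℕ} {x : ℕ → ℕ} (hk : n < k)
    (hx : ∀ j, n < j → x j ≠ 0) : ¬ WalkHitsZero k x := by
  rintro ⟨ℓ, -, hℓ⟩
  have := neg_min_le_sum_Icc_sub_one hx ℓ
  omega

variable {Ω ι : Type*} {mΩ : MeasurableSpace Ω} {μ : Measure Ω}

theorem measure_preimage_zero_of_map_eq_poissonMeasure {X : Ω → ℕ} (hX : Measurable X)
    {t : ℝ≥0} (h : μ.map X = poissonMeasure t) :
    μ (X ⁻¹' {0}) = ENNReal.ofReal (Real.exp (-t)) := by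
  rw [← Measure.map_apply hX (measurableSet_singleton 0), h, poissonMeasure_singleton]
  simp

namespace ProbabilityTheory

theorem iIndepFun.measure_biInter_preimage_pos {β : Type*} [MeasurableSpace β] {X : ι → Ω → β}
    (h : iIndepFun X μ) {s : Set β} (hs : MeasurableSet s) (S : Finset ι)
    (hpos : ∀ i ∈ S, μ (X i ⁻¹' s) ≠ 0) : 0 < μ (⋂ i ∈ S, X i ⁻¹' s) := by
  rw [h.measure_inter_preimage_eq_mul (sets := fun _ => s) S fun _ _ => hs]
  exact CanonicallyOrderedAdd.prod_pos.2 fun i hi => pos_iff_ne_zero.2 (hpos i hi)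

theorem iIndep.measure_iInter_compl_pos [Countable ι] [IsProbabilityMeasure μ]
    {m : ι → MeasurableSpace Ω} (h_le : ∀ i, m i ≤ mΩ) (h_indep : iIndep m μ) {E : ι → Set Ω}
    (hE : ∀ i, MeasurableSet[m i] (E i)) (hlt : ∀ i, μ (E i) < 1) (hsum : ∑' i, μ (E i) ≠ ∞) :
    0 < μ (⋂ i, (E i)ᶜ) := by
  classical
  obtain ⟨F, hF⟩ : ∃ F : Finset ι, ∑' i : {i // i ∉ F}, μ (E i) < 1 :=
    ((ENNReal.tendsto_tsum_compl_atTop_zero hsum).eventually (gt_mem_nhds one_pos)).exists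
  have hsplit : ⋂ i, (E i)ᶜ = (⋂ i ∈ F, (E i)ᶜ) ∩ ⋂ i : {i // i ∉ F}, (E i)ᶜ := by
    ext ω
    simp only [Set.mem_iInter, Set.mem_inter_iff, Subtype.forall]
    exact ⟨fun h => ⟨fun i _ => h i, fun i _ => h i⟩,
      fun h i => if hi : i ∈ F then h.1 i hi else h.2 i hi⟩
  have hblock : 0 < μ (⋂ i ∈ F, (E i)ᶜ) := by
    rw [h_indep.meas_biInter fun i _ => (hE i).compl]
    refine CanonicallyOrderedAdd.prod_pos.2 fun i _ => ?_
    rw [prob_compl_eq_one_sub (h_le i _ (hE i))]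
    exact tsub_pos_of_lt (hlt i)
  have htail : 0 < μ (⋂ i : {i // i ∉ F}, (E i)ᶜ) := by
    have hunion : μ (⋃ i : {i // i ∉ F}, E i) < 1 := (measure_iUnion_le _).trans_lt hF
    rw [← Set.compl_iUnion,
      prob_compl_eq_one_sub (.iUnion fun i : {i // i ∉ F} => h_le i _ (hE i))]
    exact tsub_pos_of_lt hunion
  have hmeas_sup : ∀ (S : Set ι), ∀ i ∈ S, MeasurableSet[⨆ i ∈ S, m i] (E i)ᶜ :=
    fun S i hi => le_iSup₂ (f := fun i _ => m i) i hi _ (hE i).compl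
  rw [hsplit, (Indep_iff _ _ μ).1 (indep_iSup_of_disjoint h_le h_indep disjoint_compl_right) _ _
    (F.measurableSet_biInter fun i hi => hmeas_sup F i hi)
    (.iInter fun i : {i // i ∉ F} => hmeas_sup (↑F)ᶜ i i.2)]
  exact ENNReal.mul_pos hblock.ne' htail.ne'

theorem iIndepFun.measure_iInter_preimage_compl_pos [Countable ι] [IsProbabilityMeasure μ]
    {β : Type*} [MeasurableSpace β] {X : ι → Ω → β} (hX : ∀ i, Measurable (X i))
    (h : iIndepFun X μ) {s : Set β} (hs : MeasurableSet s) (hlt : ∀ i, μ (X i ⁻¹' s) < 1)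
    (hsum : ∑' i, μ (X i ⁻¹' s) ≠ ∞) : 0 < μ (⋂ i, (X i ⁻¹' s)ᶜ) :=
  h.iIndep.measure_iInter_compl_pos (fun i => (hX i).comap_le) (fun _ => ⟨s, hs, rfl⟩) hlt hsum

end ProbabilityTheory

/-- Let `r ≥ 2`, `c > 0`, and `k ≥ r`. Let `ξ ℓ` (for `ℓ ≥ 1`) be independent
Poisson random variables with means `C(ℓ-1, r-1) * c^r`, and let `S ℓ = ∑_{j=1}^ℓ (ξ j - 1)`.
Then the hitting probability `q k = Pr(∃ ℓ ≥ 1, k + S ℓ ≤ 0)` satisfies `0 < q k < 1`. -/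
theorem poisson_walk_hitting_prob_pos_lt_one
    (r : ℕ) (hr : 2 ≤ r) (c : ℝ≥0) (hc : 0 < c) (k : ℕ) (hk : r ≤ k)
    {Ω : Type} [MeasurableSpace Ω] (μ : Measure Ω) [IsProbabilityMeasure μ]
    (ξ : ℕ → Ω → ℕ) (hmeas : ∀ ℓ, Measurable (ξ ℓ))
    (hindep : iIndepFun ξ μ)
    (hdist : ∀ ℓ, 1 ≤ ℓ →
      μ.map (ξ ℓ) = poissonMeasure ((Nat.choose (ℓ - 1) (r - 1) : ℝ≥0) * c ^ r)) :
    0 < μ {ω | ∃ ℓ ≥ 1, (k : ℤ) + ∑ j ∈ Finset.Icc 1 ℓ, ((ξ j ω : ℤ) - 1) ≤ 0} ∧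
    μ {ω | ∃ ℓ ≥ 1, (k : ℤ) + ∑ j ∈ Finset.Icc 1 ℓ, ((ξ j ω : ℤ) - 1) ≤ 0} < 1 := by
  have hzero (j : ℕ) (hj : 1 ≤ j) : μ (ξ j ⁻¹' {0}) =
      ENNReal.ofReal (Real.exp (-((j - 1).choose (r - 1) * (c : ℝ) ^ r))) := by
    rw [measure_preimage_zero_of_map_eq_poissonMeasure (hmeas j) (hdist j hj)]
    simp
  let J := {j // r ≤ j}
  have hJ (j : J) : 1 ≤ (j : ℕ) := one_le_two.trans (hr.trans j.2)
  have hlt (j : J) : μ (ξ j ⁻¹' {0}) < 1 := by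
    have : 0 < (j.1 - 1).choose (r - 1) := Nat.choose_pos (by have := j.2; omega)
    rw [hzero j (hJ j), ENNReal.ofReal_lt_one, Real.exp_lt_one_iff, neg_lt_zero]
    positivity
  have hsum : ∑' j : J, μ (ξ j ⁻¹' {0}) ≠ ∞ := by
    rw [tsum_congr fun j : J => hzero j (hJ j),
      ← ENNReal.ofReal_tsum_of_nonneg (fun _ => (Real.exp_pos _).le)
        ((summable_exp_neg_choose_mul hr (by positivity)).subtype _)]
    exact ENNReal.ofReal_ne_top
  constructor
  · have hsub : ⋂ j ∈ Icc 1 k, ξ j ⁻¹' {0} ⊆ {ω | WalkHitsZero k (ξ · ω)} :=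
      fun ω hω => walkHitsZero_of_forall_eq_zero (by omega) (by simpa using hω)
    refine (hindep.measure_biInter_preimage_pos (measurableSet_singleton 0) (Icc 1 k)
      fun j hj => ?_).trans_le (measure_mono hsub)
    rw [hzero j (mem_Icc.1 hj).1]
    positivity
  · have hsub : {ω | WalkHitsZero k (ξ · ω)} ⊆ (⋂ j : J, (ξ j ⁻¹' {0})ᶜ)ᶜ :=
      fun ω hω hω' => not_walkHitsZero_of_forall_ne_zero (n := r - 1) (by omega)
        (fun j hj => by simpa using Set.mem_iInter.1 hω' ⟨j, by omega⟩) hω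
    refine (measure_mono hsub).trans_lt ?_
    rw [prob_compl_eq_one_sub (.iInter fun j : J => (hmeas j (measurableSet_singleton 0)).compl)]
    exact ENNReal.sub_lt_self ENNReal.one_ne_top one_ne_zero
      (iIndepFun.measure_iInter_preimage_compl_pos (fun j : J => hmeas j)
        (hindep.precomp Subtype.val_injective) (measurableSet_singleton 0) hlt hsum).ne'
end

section
/- Let r ≥ 2 be an integer and 0 < c₁ ≤ c₂ be reals. Then for every integer k ≥ 0, the hitting probabilities satisfy q_k(c₂) ≤ q_k(c₁): increasing the parameter c makes the inhomogeneous Poisson random walk less likely to ever reach 0. -/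
/-!
The hitting event is decreasing in the steps `ξ ℓ`: lowering any step can only help the walk
reach `0`. Whether it happens within the first `L` steps is a lower set of
`(ξ 1, …, ξ L)`, whose law is, by independence, the product of Poisson laws. Since
`Po(λ') = Po(λ) ∗ Po(λ' - λ)`, a Poisson law with larger mean puts less mass on every lower
set of `ℕ`, and this stochastic order passes to finite products by applying Fubini one factor
at a time. Letting `L → ∞` gives the claim, as every mean `C(ℓ-1, r-1) c^r` grows with `c`.
-/

open MeasureTheory ProbabilityTheory
open scoped NNReal

section StochasticOrder

variable {α β : Type*} [Preorder α] [Preorder β] [MeasurableSpace α] [MeasurableSpace β]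

/-- `μ` is below `ν` in the usual stochastic order. -/
def StochasticallyLE (μ ν : Measure α) : Prop :=
  ∀ s, MeasurableSet s → IsLowerSet s → ν s ≤ μ s

namespace StochasticallyLE

section

variable {μ μ' : Measure α}

@[refl]
lemma refl (μ : Measure α) : StochasticallyLE μ μ := fun _ _ _ => le_rfl

lemma map (h : StochasticallyLE μ μ') {f : α → β} (hf : Measurable f) (hf_mono : Monotone f) :
    StochasticallyLE (μ.map f) (μ'.map f) := fun s hs hs_lower => by
  simpa only [Measure.map_apply hf hs] using h _ (hf hs) (hs_lower.preimage hf_mono)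

lemma prod {ν ν' : Measure β} [SFinite μ] [SFinite μ'] [SFinite ν] [SFinite ν']
    (hμ : StochasticallyLE μ μ') (hν : StochasticallyLE ν ν') :
    StochasticallyLE (μ.prod ν) (μ'.prod ν') := fun s hs hs_lower =>
  calc μ'.prod ν' s = ∫⁻ x, ν' (Prod.mk x ⁻¹' s) ∂μ' := Measure.prod_apply hs
    _ ≤ ∫⁻ x, ν (Prod.mk x ⁻¹' s) ∂μ' := lintegral_mono fun x =>
        hν _ (measurable_prodMk_left hs) (hs_lower.preimage (monotone_const.prodMk monotone_id))
    _ = ∫⁻ y, μ' ((·, y) ⁻¹' s) ∂ν := by rw [← Measure.prod_apply hs, Measure.prod_apply_symm hs]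
    _ ≤ ∫⁻ y, μ ((·, y) ⁻¹' s) ∂ν := lintegral_mono fun y =>
        hμ _ (measurable_prodMk_right hs) (hs_lower.preimage (monotone_id.prodMk monotone_const))
    _ = μ.prod ν s := (Measure.prod_apply_symm hs).symm

end

lemma pi {n : ℕ} {μ μ' : Fin n → Measure α} [∀ i, SigmaFinite (μ i)] [∀ i, SigmaFinite (μ' i)]
    (h : ∀ i, StochasticallyLE (μ i) (μ' i)) :
    StochasticallyLE (Measure.pi μ) (Measure.pi μ') := by
  induction n with
  | zero => rw [Measure.pi_of_empty μ, Measure.pi_of_empty μ']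
  | succ n ih =>
    have hcons : Monotone (MeasurableEquiv.piFinSuccAbove (fun _ : Fin (n + 1) => α) 0).symm :=
      fun _ _ hxy => by
        simp only [MeasurableEquiv.piFinSuccAbove_symm_apply, Fin.insertNthEquiv_zero]
        exact Fin.cons_le_cons.2 hxy
    rw [← (measurePreserving_piFinSuccAbove μ 0).symm.map_eq,
      ← (measurePreserving_piFinSuccAbove μ' 0).symm.map_eq]
    exact ((h 0).prod (ih fun i => h _)).map (MeasurableEquiv.measurable _) hcons

end StochasticallyLE

lemma ProbabilityTheory.iIndepFun.stochasticallyLE_map {Ω Ω' : Type*} [MeasurableSpace Ω]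
    [MeasurableSpace Ω'] {μ : Measure Ω} {μ' : Measure Ω'} {n : ℕ} {X : Fin n → Ω → α}
    {X' : Fin n → Ω' → α} (hind : iIndepFun X μ) (hind' : iIndepFun X' μ')
    (hX : ∀ i, Measurable (X i)) (hX' : ∀ i, Measurable (X' i))
    (hle : ∀ i, StochasticallyLE (μ.map (X i)) (μ'.map (X' i))) :
    StochasticallyLE (μ.map fun ω i => X i ω) (μ'.map fun ω i => X' i ω) := by
  have := hind.isProbabilityMeasure
  have := hind'.isProbabilityMeasure
  rw [hind.map_fun_eq_pi_map fun i => (hX i).aemeasurable,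
    hind'.map_fun_eq_pi_map fun i => (hX' i).aemeasurable]
  exact StochasticallyLE.pi hle

end StochasticOrder

section CanonicallyOrdered

variable {M : Type*} [AddCommMonoid M] [PartialOrder M] [CanonicallyOrderedAdd M]
  [MeasurableSpace M]

lemma stochasticallyLE_dirac_zero (ν : Measure M) [IsProbabilityMeasure ν] :
    StochasticallyLE (Measure.dirac 0) ν := fun s _ hs_lower => by
  by_cases h0 : (0 : M) ∈ s
  · simpa [Measure.dirac_apply_of_mem h0] using prob_le_one
  · have : s = ∅ := Set.eq_empty_of_forall_notMem fun x hx => h0 (hs_lower zero_le hx)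
    simp [this]

lemma stochasticallyLE_conv [IsOrderedAddMonoid M] [MeasurableAdd₂ M] (μ ν : Measure M)
    [SFinite μ] [IsProbabilityMeasure ν] :
    StochasticallyLE μ (μ ∗ ν) := by
  have : StochasticallyLE (μ ∗ Measure.dirac 0) (μ ∗ ν) :=
    ((StochasticallyLE.refl μ).prod (stochasticallyLE_dirac_zero ν)).map
      measurable_add fun _ _ h => add_le_add h.1 h.2
  rwa [Measure.conv_dirac_zero] at this

end CanonicallyOrdered

lemma poissonMeasure_stochasticallyLE {r r' : ℝ≥0} (h : r ≤ r') :
    StochasticallyLE (poissonMeasure r) (poissonMeasure r') := by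
  simpa [poissonMeasure_conv_poissonMeasure, add_tsub_cancel_of_le h] using
    stochasticallyLE_conv (poissonMeasure r) (poissonMeasure (r' - r))

section Walk

lemma Fin.sum_Iic_add_one_eq_sum_Icc {M : Type*} [AddCommMonoid M] {L : ℕ} (g : ℕ → M) (ℓ : Fin L) :
    ∑ i ∈ Finset.Iic ℓ, g (i + 1) = ∑ j ∈ Finset.Icc 1 ((ℓ : ℕ) + 1), g j := by
  have hIcc : Finset.Icc 1 ((ℓ : ℕ) + 1) = (Finset.Iic (ℓ : ℕ)).map (addRightEmbedding 1) := by
    simp [← Finset.Icc_bot]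
  rw [hIcc, Finset.sum_map, ← Fin.map_valEmbedding_Iic, Finset.sum_map]
  rfl

/-- Coordinate `i` of `x` is step `i + 1` of the walk. -/
def hitsZeroWithin (k L : ℕ) : Set (Fin L → ℕ) :=
  {x | ∃ ℓ : Fin L, (k : ℤ) + ∑ i ∈ Finset.Iic ℓ, ((x i : ℤ) - 1) ≤ 0}

lemma isLowerSet_hitsZeroWithin (k L : ℕ) : IsLowerSet (hitsZeroWithin k L) := by
  rintro x y hyx ⟨ℓ, hℓ⟩
  refine ⟨ℓ, le_trans ?_ hℓ⟩
  gcongr with i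
  exact hyx i

variable {Ω : Type*} (ξ : ℕ → Ω → ℕ) (k : ℕ)

lemma preimage_hitsZeroWithin (L : ℕ) :
    (fun ω (i : Fin L) => ξ (i + 1) ω) ⁻¹' hitsZeroWithin k L =
      {ω | ∃ ℓ ∈ Set.Icc 1 L, (k : ℤ) + ∑ j ∈ Finset.Icc 1 ℓ, ((ξ j ω : ℤ) - 1) ≤ 0} := by
  ext ω
  simp only [hitsZeroWithin, Set.mem_preimage]
  have hsum := Fin.sum_Iic_add_one_eq_sum_Icc (L := L) fun j => (ξ j ω : ℤ) - 1
  constructor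
  · rintro ⟨ℓ, hℓ⟩
    exact ⟨ℓ + 1, ⟨by omega, ℓ.isLt⟩, by rwa [← hsum]⟩
  · rintro ⟨ℓ, ⟨h1, hL⟩, hℓ⟩
    obtain ⟨m, rfl⟩ := Nat.exists_eq_add_of_le' h1
    exact ⟨⟨m, by omega⟩, by rwa [hsum]⟩

lemma measure_walk_hits_zero_eq_iSup [MeasurableSpace Ω] (μ : Measure Ω) :
    μ {ω | ∃ ℓ ≥ 1, (k : ℤ) + ∑ j ∈ Finset.Icc 1 ℓ, ((ξ j ω : ℤ) - 1) ≤ 0} =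
      ⨆ L, μ ((fun ω (i : Fin L) => ξ (i + 1) ω) ⁻¹' hitsZeroWithin k L) := by
  simp_rw [preimage_hitsZeroWithin]
  rw [← Monotone.measure_iUnion]
  · congr 1
    ext ω
    simp only [Set.mem_iUnion]
    exact ⟨fun ⟨ℓ, h1, hℓ⟩ => ⟨ℓ, ℓ, ⟨h1, le_rfl⟩, hℓ⟩, fun ⟨_, ℓ, ⟨h1, _⟩, hℓ⟩ => ⟨ℓ, h1, hℓ⟩⟩
  · rintro L L' hLL' ω ⟨ℓ, ⟨h1, hL⟩, hℓ⟩
    exact ⟨ℓ, ⟨h1, hL.trans hLL'⟩, hℓ⟩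

end Walk

theorem poisson_walk_hitting_prob_antitone_in_c_general
    (r : ℕ) (c₁ c₂ : ℝ≥0) (hc : c₁ ≤ c₂) (k : ℕ)
    {Ω₁ : Type} [MeasurableSpace Ω₁] (μ₁ : Measure Ω₁)
    (ξ₁ : ℕ → Ω₁ → ℕ) (hmeas₁ : ∀ ℓ, Measurable (ξ₁ ℓ))
    (hindep₁ : iIndepFun ξ₁ μ₁)
    (hdist₁ : ∀ ℓ, 1 ≤ ℓ →
      μ₁.map (ξ₁ ℓ) = poissonMeasure ((Nat.choose (ℓ - 1) (r - 1) : ℝ≥0) * c₁ ^ r))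
    {Ω₂ : Type} [MeasurableSpace Ω₂] (μ₂ : Measure Ω₂)
    (ξ₂ : ℕ → Ω₂ → ℕ) (hmeas₂ : ∀ ℓ, Measurable (ξ₂ ℓ))
    (hindep₂ : iIndepFun ξ₂ μ₂)
    (hdist₂ : ∀ ℓ, 1 ≤ ℓ →
      μ₂.map (ξ₂ ℓ) = poissonMeasure ((Nat.choose (ℓ - 1) (r - 1) : ℝ≥0) * c₂ ^ r)) :
    μ₂ {ω | ∃ ℓ ≥ 1, (k : ℤ) + ∑ j ∈ Finset.Icc 1 ℓ, ((ξ₂ j ω : ℤ) - 1) ≤ 0} ≤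
      μ₁ {ω | ∃ ℓ ≥ 1, (k : ℤ) + ∑ j ∈ Finset.Icc 1 ℓ, ((ξ₁ j ω : ℤ) - 1) ≤ 0} := by
  rw [measure_walk_hits_zero_eq_iSup, measure_walk_hits_zero_eq_iSup]
  refine iSup_mono fun L => ?_
  have hshift : Function.Injective fun i : Fin L => (i : ℕ) + 1 :=
    (add_left_injective 1).comp Fin.val_injective
  have hlaw := (hindep₁.precomp hshift).stochasticallyLE_map (hindep₂.precomp hshift)
    (fun _ => hmeas₁ _) (fun _ => hmeas₂ _) fun i => by
      rw [hdist₁ _ (by omega), hdist₂ _ (by omega)]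
      exact poissonMeasure_stochasticallyLE (by gcongr)
  have hmeas_event := MeasurableSet.of_discrete (s := hitsZeroWithin k L)
  simpa only [Measure.map_apply (measurable_pi_lambda _ fun _ => hmeas₁ _) hmeas_event,
    Measure.map_apply (measurable_pi_lambda _ fun _ => hmeas₂ _) hmeas_event] using
    hlaw _ hmeas_event (isLowerSet_hitsZeroWithin k L)

/-- Let `r ≥ 2` and `0 < c₁ ≤ c₂`. For `c > 0`, let `ξ ℓ` (for `ℓ ≥ 1`) be
independent Poisson random variables with means `C(ℓ-1, r-1) * c^r`, let
`S ℓ = ∑_{j=1}^ℓ (ξ j - 1)`, and let `q k (c)` be the probability that `∃ ℓ ≥ 1, k + S ℓ ≤ 0`.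
Then for every `k ≥ 0` we have `q k (c₂) ≤ q k (c₁)`: increasing `c` makes the walk less likely
to ever reach `0`. -/
theorem poisson_walk_hitting_prob_antitone_in_c
    (r : ℕ) (hr : 2 ≤ r) (c₁ c₂ : ℝ≥0) (hc₁ : 0 < c₁) (hc : c₁ ≤ c₂) (k : ℕ)
    {Ω₁ : Type} [MeasurableSpace Ω₁] (μ₁ : Measure Ω₁) [IsProbabilityMeasure μ₁]
    (ξ₁ : ℕ → Ω₁ → ℕ) (hmeas₁ : ∀ ℓ, Measurable (ξ₁ ℓ))
    (hindep₁ : iIndepFun ξ₁ μ₁)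
    (hdist₁ : ∀ ℓ, 1 ≤ ℓ →
      μ₁.map (ξ₁ ℓ) = poissonMeasure ((Nat.choose (ℓ - 1) (r - 1) : ℝ≥0) * c₁ ^ r))
    {Ω₂ : Type} [MeasurableSpace Ω₂] (μ₂ : Measure Ω₂) [IsProbabilityMeasure μ₂]
    (ξ₂ : ℕ → Ω₂ → ℕ) (hmeas₂ : ∀ ℓ, Measurable (ξ₂ ℓ))
    (hindep₂ : iIndepFun ξ₂ μ₂)
    (hdist₂ : ∀ ℓ, 1 ≤ ℓ →
      μ₂.map (ξ₂ ℓ) = poissonMeasure ((Nat.choose (ℓ - 1) (r - 1) : ℝ≥0) * c₂ ^ r)) :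
    μ₂ {ω | ∃ ℓ ≥ 1, (k : ℤ) + ∑ j ∈ Finset.Icc 1 ℓ, ((ξ₂ j ω : ℤ) - 1) ≤ 0} ≤
      μ₁ {ω | ∃ ℓ ≥ 1, (k : ℤ) + ∑ j ∈ Finset.Icc 1 ℓ, ((ξ₁ j ω : ℤ) - 1) ≤ 0} :=
  poisson_walk_hitting_prob_antitone_in_c_general r c₁ c₂ hc k μ₁ ξ₁ hmeas₁ hindep₁ hdist₁ μ₂ ξ₂
    hmeas₂ hindep₂ hdist₂
end

section
/- Let r ≥ 2 be an integer, (X_n) a sequence of positive integers with X_n/n → a for some real a > 0, and (p_n) ⊂ (0,1) a sequence with n^{1+1/r}·p_n → ∞ and n·p_n → 0. Then n·C(X_n, r)·p_n^r·(1−p_n)^{X_n − r} → ∞ as n → ∞; consequently n·Pr(Binomial(X_n, p_n) ≥ r) → ∞. -/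
open Filter
open scoped Topology

/-- The probability that a `Binomial (m, p)` random variable is at least `r`:
`∑_{k=r}^{m} C(m,k) p^k (1-p)^{m-k}`. -/
noncomputable def binomialProbGE (m : ℕ) (p : ℝ) (r : ℕ) : ℝ :=
  ∑ k ∈ Finset.Icc r m, (m.choose k : ℝ) * p ^ k * (1 - p) ^ (m - k)

/-! Write `T = C(X, r) p^r (1 - p)^(X - r)`. Since `C(X, r) ≥ (X - r)^r / r!` and, by Bernoulli's
inequality, `(1 - p)^(X - r) ≥ 1 - X p`, we get
`n T ≥ (n^(1 + 1/r) p)^r · ((X - r) / n)^r / r! · (1 - X p)`.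
The first factor tends to infinity and the rest tends to `a^r / r! > 0`, because `X p ~ a n p → 0`. -/

theorem choose_mul_pow_mul_one_sub_pow_le_binomialProbGE {m r : ℕ} {p : ℝ} (hp₀ : 0 ≤ p)
    (hp₁ : p ≤ 1) : (m.choose r : ℝ) * p ^ r * (1 - p) ^ (m - r) ≤ binomialProbGE m p r := by
  have hterm : ∀ k ∈ Finset.Icc r m, 0 ≤ (m.choose k : ℝ) * p ^ k * (1 - p) ^ (m - k) := by
    intro k _
    have : 0 ≤ 1 - p := by linarith
    positivity
  by_cases hrm : r ≤ m
  · exact Finset.single_le_sum hterm (Finset.mem_Icc.2 ⟨le_rfl, hrm⟩)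
  · simp [Nat.choose_eq_zero_of_lt (not_le.1 hrm), binomialProbGE, Finset.sum_nonneg hterm]

theorem sub_pow_div_factorial_mul_le_choose_mul_pow {m r : ℕ} {p : ℝ} (hp₀ : 0 ≤ p)
    (hp₁ : p ≤ 1) :
    ((m - r : ℕ) * p) ^ r / r.factorial * (1 - m * p) ≤
      (m.choose r : ℝ) * p ^ r * (1 - p) ^ (m - r) := by
  have hchoose : ((m - r : ℕ) : ℝ) ^ r / r.factorial ≤ m.choose r :=
    le_trans (by gcongr; omega) (Nat.pow_le_choose r m)
  have hbernoulli : 1 - m * p ≤ (1 - p) ^ (m - r) := by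
    have hsub : ((m - r : ℕ) : ℝ) ≤ m := by exact_mod_cast m.sub_le r
    have hpow := one_add_mul_le_pow (a := -p) (by linarith) (m - r)
    rw [← sub_eq_add_neg] at hpow
    linarith [mul_le_mul_of_nonneg_right hsub hp₀]
  rcases le_total (1 - m * p) 0 with hneg | hpos
  · calc ((m - r : ℕ) * p) ^ r / r.factorial * (1 - m * p) ≤ 0 :=
          mul_nonpos_of_nonneg_of_nonpos (by positivity) hneg
      _ ≤ (m.choose r : ℝ) * p ^ r * (1 - p) ^ (m - r) := by
          have : 0 ≤ 1 - p := by linarith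
          positivity
  · calc ((m - r : ℕ) * p) ^ r / r.factorial * (1 - m * p)
        = ((m - r : ℕ) : ℝ) ^ r / r.factorial * p ^ r * (1 - m * p) := by ring
      _ ≤ (m.choose r : ℝ) * p ^ r * (1 - p) ^ (m - r) := by gcongr

theorem rpow_one_add_one_div_pow {x : ℝ} (hx : 0 ≤ x) {r : ℕ} (hr : r ≠ 0) :
    (x ^ (1 + 1 / (r : ℝ))) ^ r = x ^ (r + 1) := by
  rw [← Real.rpow_natCast, ← Real.rpow_mul hx, ← Real.rpow_natCast]
  congr 1
  field_simp
  push_cast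
  ring

theorem tendsto_natCast_sub_div {X : ℕ → ℕ} {a : ℝ}
    (hXa : Tendsto (fun n : ℕ => (X n : ℝ) / n) atTop (𝓝 a)) (r : ℕ) :
    Tendsto (fun n : ℕ => ((X n - r : ℕ) : ℝ) / n) atTop (𝓝 a) := by
  have hlower : Tendsto (fun n : ℕ => (X n : ℝ) / n - r / n) atTop (𝓝 a) := by
    simpa using hXa.sub (tendsto_const_div_atTop_nhds_zero_nat (r : ℝ))
  refine tendsto_of_tendsto_of_tendsto_of_le_of_le hlower hXa (fun n => ?_) (fun n => ?_)
  · rw [← sub_div]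
    gcongr
    rw [sub_le_iff_le_add, ← Nat.cast_add]
    exact Nat.cast_le.2 le_tsub_add
  · gcongr
    exact_mod_cast (X n).sub_le r

theorem tendsto_mul_of_tendsto_div_of_tendsto_natCast_mul {x p : ℕ → ℝ} {a : ℝ}
    (hx : Tendsto (fun n : ℕ => x n / n) atTop (𝓝 a))
    (hp : Tendsto (fun n : ℕ => (n : ℝ) * p n) atTop (𝓝 0)) :
    Tendsto (fun n => x n * p n) atTop (𝓝 0) := by
  have hprod := hx.mul hp
  rw [mul_zero] at hprod
  refine hprod.congr' ?_
  filter_upwards [eventually_ne_atTop 0] with n hn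
  field_simp

theorem tendsto_atTop_natCast_mul_choose_mul_pow {r : ℕ} (hr : r ≠ 0) {X : ℕ → ℕ} {a : ℝ}
    (ha : 0 < a) (hXa : Tendsto (fun n : ℕ => (X n : ℝ) / n) atTop (𝓝 a)) {p : ℕ → ℝ}
    (hp : ∀ n, p n ∈ Set.Icc (0 : ℝ) 1)
    (h1 : Tendsto (fun n : ℕ => (n : ℝ) ^ ((1 : ℝ) + 1 / (r : ℝ)) * p n) atTop atTop)
    (h2 : Tendsto (fun n : ℕ => (n : ℝ) * p n) atTop (𝓝 0)) :
    Tendsto (fun n : ℕ =>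
      (n : ℝ) * ((X n).choose r : ℝ) * p n ^ r * (1 - p n) ^ (X n - r)) atTop atTop := by
  have hfactor : Tendsto (fun n : ℕ => (((X n - r : ℕ) : ℝ) / n) ^ r / r.factorial *
      (1 - X n * p n)) atTop (𝓝 (a ^ r / r.factorial * (1 - 0))) :=
    (((tendsto_natCast_sub_div hXa r).pow r).div_const _).mul
      (tendsto_const_nhds.sub (tendsto_mul_of_tendsto_div_of_tendsto_natCast_mul hXa h2))
  have hlower := ((tendsto_pow_atTop hr).comp h1).atTop_mul_pos (by positivity) hfactor
  refine tendsto_atTop_mono' _ ?_ hlower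
  filter_upwards [eventually_ne_atTop 0] with n hn
  have hn' : (n : ℝ) ≠ 0 := Nat.cast_ne_zero.2 hn
  calc ((n : ℝ) ^ ((1 : ℝ) + 1 / (r : ℝ)) * p n) ^ r *
        ((((X n - r : ℕ) : ℝ) / n) ^ r / r.factorial * (1 - X n * p n))
      = n * ((((X n - r : ℕ) : ℝ) * p n) ^ r / r.factorial * (1 - X n * p n)) := by
        rw [mul_pow, rpow_one_add_one_div_pow n.cast_nonneg hr, div_pow, pow_succ]
        field_simp
        ring
    _ ≤ n * ((X n).choose r * p n ^ r * (1 - p n) ^ (X n - r)) :=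
        mul_le_mul_of_nonneg_left
          (sub_pow_div_factorial_mul_le_choose_mul_pow (hp n).1 (hp n).2) n.cast_nonneg
    _ = n * (X n).choose r * p n ^ r * (1 - p n) ^ (X n - r) := by ring

theorem tendsto_atTop_n_mul_binomial_term_general
    (r : ℕ) (hr : 2 ≤ r) (X : ℕ → ℕ)
    (a : ℝ) (ha : 0 < a)
    (hXa : Tendsto (fun n : ℕ => (X n : ℝ) / (n : ℝ)) atTop (𝓝 a))
    (p : ℕ → ℝ) (hp : ∀ n, p n ∈ Set.Ioo (0 : ℝ) 1)
    (h1 : Tendsto (fun n : ℕ => (n : ℝ) ^ ((1 : ℝ) + 1 / (r : ℝ)) * p n) atTop atTop)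
    (h2 : Tendsto (fun n : ℕ => (n : ℝ) * p n) atTop (𝓝 0)) :
    Tendsto (fun n : ℕ =>
        (n : ℝ) * ((X n).choose r : ℝ) * (p n) ^ r * (1 - p n) ^ (X n - r)) atTop atTop ∧
    Tendsto (fun n : ℕ => (n : ℝ) * binomialProbGE (X n) (p n) r) atTop atTop := by
  have hpIcc : ∀ n, p n ∈ Set.Icc (0 : ℝ) 1 := fun n => Set.Ioo_subset_Icc_self (hp n)
  have hterm := tendsto_atTop_natCast_mul_choose_mul_pow (by omega) ha hXa hpIcc h1 h2
  refine ⟨hterm, tendsto_atTop_mono (fun n => ?_) hterm⟩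
  simpa only [mul_assoc] using mul_le_mul_of_nonneg_left
    (choose_mul_pow_mul_one_sub_pow_le_binomialProbGE (hpIcc n).1 (hpIcc n).2) n.cast_nonneg

/-- Let `r ≥ 2`, `(X n)` positive integers with `X n / n → a > 0`, and
`p n ∈ (0,1)` with `n^{1+1/r} * p n → ∞` and `n * p n → 0`. Then
`n * C(X n, r) * (p n)^r * (1 - p n)^(X n - r) → ∞`, and consequently
`n * Pr(Binomial (X n, p n) ≥ r) → ∞`. -/
theorem tendsto_atTop_n_mul_binomial_term
    (r : ℕ) (hr : 2 ≤ r) (X : ℕ → ℕ) (hX : ∀ n, 0 < X n)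
    (a : ℝ) (ha : 0 < a)
    (hXa : Tendsto (fun n : ℕ => (X n : ℝ) / (n : ℝ)) atTop (𝓝 a))
    (p : ℕ → ℝ) (hp : ∀ n, p n ∈ Set.Ioo (0 : ℝ) 1)
    (h1 : Tendsto (fun n : ℕ => (n : ℝ) ^ ((1 : ℝ) + 1 / (r : ℝ)) * p n) atTop atTop)
    (h2 : Tendsto (fun n : ℕ => (n : ℝ) * p n) atTop (𝓝 0)) :
    Tendsto (fun n : ℕ =>
        (n : ℝ) * ((X n).choose r : ℝ) * (p n) ^ r * (1 - p n) ^ (X n - r)) atTop atTop ∧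
    Tendsto (fun n : ℕ => (n : ℝ) * binomialProbGE (X n) (p n) r) atTop atTop :=
  tendsto_atTop_n_mul_binomial_term_general r hr X a ha hXa p hp h1 h2
end

section
/- Let r ≥ 2 be an integer and a, b > 0 reals. Let (X_n) and (m_n) be sequences of positive integers with X_n/n → a and m_n/n → b, and let (p_n) ⊂ (0,1) satisfy n^{1+1/r}·p_n → ∞ and n·p_n → 0. For each n, let π_n = Pr(Binomial(X_n, p_n) ≥ r), and let Y_n be a random variable with the Binomial(m_n, π_n) distribution (Y_n is the number, among m_n vertices each of which independently has a Binomial(X_n, p_n)-distributed number of infected neighbors, of vertices with at least r infected neighbors). Then for every M > 0, Pr(Y_n ≥ M) → 1 as n → ∞. -/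
open Filter
open scoped Topology

/-!
Write `π = binomialProbGE X p r`. Keeping only the term `k = r` and using `(1 - p) ^ X → 1`
(because `X p → 0`) gives `r! · m π ≳ m (X p) ^ r ≈ b a ^ r (n ^ (1 + 1/r) p) ^ r → ∞`.
A binomial variable whose mean `m π` tends to infinity exceeds any fixed `M` with probability
tending to one: each of the finitely many probabilities `P(Y = k)`, `k < M`, is at most
`(m π) ^ k e ^ (k - m π) → 0`.
-/

open Finset Real
open scoped Nat

lemma sum_range_choose_mul_pow_mul_one_sub_pow (m : ℕ) (q : ℝ) :
    ∑ k ∈ range (m + 1), (m.choose k : ℝ) * q ^ k * (1 - q) ^ (m - k) = 1 := by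
  simpa [mul_comm, mul_assoc, mul_left_comm] using (add_pow q (1 - q) m).symm

section BinomialTerms

variable {q : ℝ}

lemma choose_mul_pow_mul_one_sub_pow_nonneg (hq : q ∈ Set.Icc 0 1) (m k : ℕ) :
    0 ≤ (m.choose k : ℝ) * q ^ k * (1 - q) ^ (m - k) := by
  have : 0 ≤ 1 - q := sub_nonneg.2 hq.2
  have := hq.1
  positivity

lemma choose_mul_pow_mul_one_sub_pow_le_exp (hq : q ∈ Set.Icc 0 1) (m k : ℕ) :
    (m.choose k : ℝ) * q ^ k * (1 - q) ^ (m - k) ≤ (m * q) ^ k * exp (k - m * q) := by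
  have h1q : 0 ≤ 1 - q := sub_nonneg.2 hq.2
  have hchoose : (m.choose k : ℝ) ≤ (m : ℝ) ^ k := by exact_mod_cast Nat.choose_le_pow m k
  have hexp : (1 - q) ^ (m - k) ≤ exp (k - m * q) := calc
    (1 - q) ^ (m - k) ≤ exp (-q) ^ (m - k) :=
      pow_le_pow_left₀ h1q (one_sub_le_exp_neg q) _
    _ = exp (-(((m - k : ℕ) : ℝ) * q)) := by rw [← exp_nat_mul]; ring_nf
    _ ≤ exp (k - m * q) := by
      have : (m : ℝ) - k ≤ ((m - k : ℕ) : ℝ) := by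
        rw [sub_le_iff_le_add]; exact_mod_cast le_tsub_add
      gcongr
      nlinarith [hq.1, hq.2, (k.cast_nonneg : (0 : ℝ) ≤ k)]
  rw [mul_pow]
  have := hq.1
  gcongr

lemma binomialProbGE_nonneg (hq : q ∈ Set.Icc 0 1) (m r : ℕ) : 0 ≤ binomialProbGE m q r :=
  sum_nonneg fun k _ => choose_mul_pow_mul_one_sub_pow_nonneg hq m k

lemma binomialProbGE_le_one (hq : q ∈ Set.Icc 0 1) (m r : ℕ) : binomialProbGE m q r ≤ 1 := by
  rw [← sum_range_choose_mul_pow_mul_one_sub_pow m q]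
  refine sum_le_sum_of_subset_of_nonneg (fun k hk => ?_)
    fun k _ _ => choose_mul_pow_mul_one_sub_pow_nonneg hq m k
  rw [mem_Icc] at hk
  rw [mem_range]
  omega

lemma binomialProbGE_mem_Icc (hq : q ∈ Set.Icc 0 1) (m r : ℕ) :
    binomialProbGE m q r ∈ Set.Icc 0 1 :=
  ⟨binomialProbGE_nonneg hq m r, binomialProbGE_le_one hq m r⟩

lemma sub_add_one_pow_mul_pow_mul_one_sub_pow_le_factorial_mul (hq : q ∈ Set.Icc 0 1) {m r : ℕ}
    (hrm : r ≤ m) :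
    ((m : ℝ) - r + 1) ^ r * q ^ r * (1 - q) ^ m ≤ r ! * binomialProbGE m q r := by
  have h1q : 0 ≤ 1 - q := sub_nonneg.2 hq.2
  have hdesc : ((m : ℝ) - r + 1) ^ r ≤ r ! * m.choose r := by
    have := Nat.pow_sub_le_descFactorial m r
    rw [Nat.descFactorial_eq_factorial_mul_choose] at this
    have hcast : ((m + 1 - r : ℕ) : ℝ) = (m : ℝ) - r + 1 := by
      rw [Nat.cast_sub (by omega)]; push_cast; ring
    rw [← hcast]
    exact_mod_cast this
  have hterm : (m.choose r : ℝ) * q ^ r * (1 - q) ^ (m - r) ≤ binomialProbGE m q r :=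
    single_le_sum (f := fun k => (m.choose k : ℝ) * q ^ k * (1 - q) ^ (m - k))
      (fun k _ => choose_mul_pow_mul_one_sub_pow_nonneg hq m k) (mem_Icc.2 ⟨le_rfl, hrm⟩)
  have := hq.1
  calc ((m : ℝ) - r + 1) ^ r * q ^ r * (1 - q) ^ m
      ≤ r ! * m.choose r * q ^ r * (1 - q) ^ (m - r) :=
        mul_le_mul (mul_le_mul_of_nonneg_right hdesc (by positivity))
          (pow_le_pow_of_le_one h1q (by linarith) (Nat.sub_le m r)) (by positivity) (by positivity)
    _ ≤ r ! * binomialProbGE m q r := by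
        rw [mul_assoc, mul_assoc]
        gcongr
        simpa only [mul_assoc] using hterm

lemma binomial_lower_tail_le_sum_exp (hq : q ∈ Set.Icc 0 1) (m : ℕ) (M : ℝ) :
    ∑ k ∈ range (m + 1) with ¬ M ≤ ((k : ℕ) : ℝ), (m.choose k : ℝ) * q ^ k * (1 - q) ^ (m - k) ≤
      ∑ k ∈ range ⌈M⌉₊, (m * q) ^ k * exp (k - m * q) := calc
  _ ≤ ∑ k ∈ range (m + 1) with ¬ M ≤ ((k : ℕ) : ℝ), (m * q) ^ k * exp (k - m * q) :=
      sum_le_sum fun k _ => choose_mul_pow_mul_one_sub_pow_le_exp hq m k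
  _ ≤ ∑ k ∈ range ⌈M⌉₊, (m * q) ^ k * exp (k - m * q) := by
      refine sum_le_sum_of_subset_of_nonneg (fun k hk => ?_) fun k _ _ => ?_
      · rw [mem_filter, not_le] at hk
        exact mem_range.2 (Nat.lt_ceil.2 hk.2)
      · have := hq.1
        positivity

end BinomialTerms

theorem tendsto_binomial_upper_tail_of_tendsto_mul_atTop {ι : Type*} {l : Filter ι} {m : ι → ℕ}
    {q : ι → ℝ} (hq : ∀ i, q i ∈ Set.Icc 0 1)
    (hmq : Tendsto (fun i => (m i : ℝ) * q i) l atTop) (M : ℝ) :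
    Tendsto (fun i => ∑ k ∈ range (m i + 1), if M ≤ (k : ℝ) then
      ((m i).choose k : ℝ) * q i ^ k * (1 - q i) ^ (m i - k) else 0) l (𝓝 1) := by
  set lowerTail := fun i => ∑ k ∈ range (m i + 1) with ¬ M ≤ ((k : ℕ) : ℝ),
    ((m i).choose k : ℝ) * q i ^ k * (1 - q i) ^ (m i - k)
  have hbound : Tendsto (fun i => ∑ k ∈ range ⌈M⌉₊, (m i * q i) ^ k * exp (k - m i * q i))
      l (𝓝 0) := by
    rw [← sum_const_zero (s := range ⌈M⌉₊)]
    refine tendsto_finsetSum _ fun k _ => ?_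
    simpa [exp_sub, div_eq_mul_inv, ← exp_neg, mul_comm, mul_left_comm, mul_assoc] using
      ((tendsto_pow_mul_exp_neg_atTop_nhds_zero k).comp hmq).const_mul (exp k)
  have hlower : Tendsto lowerTail l (𝓝 0) :=
    squeeze_zero (fun i => sum_nonneg fun k _ => choose_mul_pow_mul_one_sub_pow_nonneg (hq i) _ k)
      (fun i => binomial_lower_tail_le_sum_exp (hq i) (m i) M) hbound
  refine (show Tendsto (fun i => 1 - lowerTail i) l (𝓝 1) by
    simpa using tendsto_const_nhds.sub hlower).congr fun i => ?_
  rw [← sum_filter, sub_eq_iff_eq_add, sum_filter_add_sum_filter_not,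
    sum_range_choose_mul_pow_mul_one_sub_pow]

lemma tendsto_one_sub_pow_of_tendsto_mul_zero {ι : Type*} {l : Filter ι} {X : ι → ℕ} {p : ι → ℝ}
    (hp : ∀ i, p i ∈ Set.Icc 0 1) (hXp : Tendsto (fun i => (X i : ℝ) * p i) l (𝓝 0)) :
    Tendsto (fun i => (1 - p i) ^ X i) l (𝓝 1) := by
  refine tendsto_of_tendsto_of_tendsto_of_le_of_le
    (by simpa using tendsto_const_nhds.sub hXp) tendsto_const_nhds (fun i => ?_) fun i => ?_
  · simpa [sub_eq_add_neg] using one_add_mul_le_pow (a := -p i) (by linarith [(hp i).2]) (X i)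
  · exact pow_le_one₀ (sub_nonneg.2 (hp i).2) (by linarith [(hp i).1])

lemma rpow_one_add_one_div_mul_pow {x : ℝ} (hx : 0 ≤ x) {r : ℕ} (hr : r ≠ 0) (y : ℝ) :
    (x ^ ((1 : ℝ) + 1 / (r : ℝ)) * y) ^ r = x ^ (r + 1) * y ^ r := by
  rw [mul_pow, ← rpow_natCast (x ^ _), ← rpow_mul hx, ← rpow_natCast x]
  congr 2
  push_cast
  field_simp

lemma tendsto_mul_binomialProbGE_atTop {r : ℕ} (hr : r ≠ 0) {a b : ℝ} (ha : 0 < a) (hb : 0 < b)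
    {X m : ℕ → ℕ} (hXa : Tendsto (fun n : ℕ => (X n : ℝ) / (n : ℝ)) atTop (𝓝 a))
    (hmb : Tendsto (fun n : ℕ => (m n : ℝ) / (n : ℝ)) atTop (𝓝 b))
    {p : ℕ → ℝ} (hp : ∀ n, p n ∈ Set.Icc 0 1)
    (hpow : Tendsto (fun n : ℕ => (n : ℝ) ^ ((1 : ℝ) + 1 / (r : ℝ)) * p n) atTop atTop)
    (hnp : Tendsto (fun n : ℕ => (n : ℝ) * p n) atTop (𝓝 0)) :
    Tendsto (fun n => (m n : ℝ) * binomialProbGE (X n) (p n) r) atTop atTop := by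
  have hXtop : Tendsto (fun n => (X n : ℝ)) atTop atTop :=
    (hXa.pos_mul_atTop ha tendsto_natCast_atTop_atTop).congr' <| by
      filter_upwards [eventually_ne_atTop 0] with n hn
      field_simp
  have hXp : Tendsto (fun n => (X n : ℝ) * p n) atTop (𝓝 0) := by
    refine (mul_zero a ▸ hXa.mul hnp).congr' ?_
    filter_upwards [eventually_ne_atTop 0] with n hn
    field_simp
  set g := fun n => (m n : ℝ) / n * (((X n : ℝ) - r + 1) / n) ^ r * (1 - p n) ^ X n
  have hg : Tendsto g atTop (𝓝 (b * a ^ r * 1)) := by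
    have hXr : Tendsto (fun n : ℕ => ((X n : ℝ) - r + 1) / n) atTop (𝓝 a) := by
      refine (sub_zero a ▸ hXa.sub (tendsto_const_div_atTop_nhds_zero_nat ((r : ℝ) - 1))).congr
        fun n => ?_
      ring
    exact (hmb.mul (hXr.pow r)).mul (tendsto_one_sub_pow_of_tendsto_mul_zero hp hXp)
  have hlower : ∀ᶠ n : ℕ in atTop, ((n : ℝ) ^ ((1 : ℝ) + 1 / (r : ℝ)) * p n) ^ r * g n / r ! ≤
      m n * binomialProbGE (X n) (p n) r := by
    filter_upwards [eventually_ne_atTop 0, hXtop.eventually_ge_atTop r] with n hn hrX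
    rw [div_le_iff₀ (by positivity), rpow_one_add_one_div_mul_pow (Nat.cast_nonneg n) hr]
    calc _ = (m n : ℝ) * (((X n : ℝ) - r + 1) ^ r * p n ^ r * (1 - p n) ^ X n) := by
          simp only [g, div_pow]
          field_simp
          ring
      _ ≤ m n * (r ! * binomialProbGE (X n) (p n) r) :=
          mul_le_mul_of_nonneg_left
            (sub_add_one_pow_mul_pow_mul_one_sub_pow_le_factorial_mul (hp n)
              (by exact_mod_cast hrX))
            (Nat.cast_nonneg _)
      _ = _ := by ring
  exact tendsto_atTop_mono' atTop hlower <|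
    (((tendsto_pow_atTop hr).comp hpow).atTop_mul_pos (by positivity) hg).atTop_div_const
      (by positivity)

theorem binomial_of_binomial_tail_tendsto_one_general
    (r : ℕ) (hr : 2 ≤ r) (a b : ℝ) (ha : 0 < a) (hb : 0 < b)
    (X m : ℕ → ℕ)
    (hXa : Tendsto (fun n : ℕ => (X n : ℝ) / (n : ℝ)) atTop (𝓝 a))
    (hmb : Tendsto (fun n : ℕ => (m n : ℝ) / (n : ℝ)) atTop (𝓝 b))
    (p : ℕ → ℝ) (hp : ∀ n, p n ∈ Set.Ioo (0 : ℝ) 1)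
    (h1 : Tendsto (fun n : ℕ => (n : ℝ) ^ ((1 : ℝ) + 1 / (r : ℝ)) * p n) atTop atTop)
    (h2 : Tendsto (fun n : ℕ => (n : ℝ) * p n) atTop (𝓝 0)) :
    ∀ M : ℝ, 0 < M →
      Tendsto (fun n : ℕ => ∑ k ∈ Finset.range (m n + 1),
          if M ≤ (k : ℝ) then
            ((m n).choose k : ℝ) * (binomialProbGE (X n) (p n) r) ^ k *
              (1 - binomialProbGE (X n) (p n) r) ^ (m n - k)
          else 0) atTop (𝓝 1) := by
  intro M _
  have hp' : ∀ n, p n ∈ Set.Icc 0 1 := fun n => Set.Ioo_subset_Icc_self (hp n)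
  exact tendsto_binomial_upper_tail_of_tendsto_mul_atTop
    (fun n => binomialProbGE_mem_Icc (hp' n) _ r)
    (tendsto_mul_binomialProbGE_atTop (by omega) ha hb hXa hmb hp' h1 h2) M

/-- Let `r ≥ 2` and `a, b > 0`. Let `(X n)`, `(m n)` be positive integers with
`X n / n → a` and `m n / n → b`, and let `p n ∈ (0,1)` satisfy `n^{1+1/r} * p n → ∞` and
`n * p n → 0`. Set `π n = Pr(Binomial (X n, p n) ≥ r)` and let `Y n ~ Binomial (m n, π n)`.
Then for every `M > 0`, `Pr (Y n ≥ M) → 1`, where `Pr (Y n ≥ M)` is written out as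
`∑_{k=0}^{m n} [M ≤ k] C(m n, k) (π n)^k (1 - π n)^(m n - k)`. -/
theorem binomial_of_binomial_tail_tendsto_one
    (r : ℕ) (hr : 2 ≤ r) (a b : ℝ) (ha : 0 < a) (hb : 0 < b)
    (X m : ℕ → ℕ) (hX : ∀ n, 0 < X n) (hm : ∀ n, 0 < m n)
    (hXa : Tendsto (fun n : ℕ => (X n : ℝ) / (n : ℝ)) atTop (𝓝 a))
    (hmb : Tendsto (fun n : ℕ => (m n : ℝ) / (n : ℝ)) atTop (𝓝 b))
    (p : ℕ → ℝ) (hp : ∀ n, p n ∈ Set.Ioo (0 : ℝ) 1)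
    (h1 : Tendsto (fun n : ℕ => (n : ℝ) ^ ((1 : ℝ) + 1 / (r : ℝ)) * p n) atTop atTop)
    (h2 : Tendsto (fun n : ℕ => (n : ℝ) * p n) atTop (𝓝 0)) :
    ∀ M : ℝ, 0 < M →
      Tendsto (fun n : ℕ => ∑ k ∈ Finset.range (m n + 1),
          if M ≤ (k : ℝ) then
            ((m n).choose k : ℝ) * (binomialProbGE (X n) (p n) r) ^ k *
              (1 - binomialProbGE (X n) (p n) r) ^ (m n - k)
          else 0) atTop (𝓝 1) :=
  binomial_of_binomial_tail_tendsto_one_general r hr a b ha hb X m hXa hmb p hp h1 h2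
end

section
/- Fix an integer K ≥ 0. Let (p_n) ⊂ (0,1) be a sequence with n·p_n → ∞ and p_n → 0, and for n > K set p̄_n = (1 − K/n)·p_n + K/n. Then the total variation distance between the law of K + B_n, where B_n ~ Binomial(n−K, p_n), and the law Binomial(n, p̄_n) tends to 0 as n → ∞. -/
/-!
Write `n = m + K`, `q = Binomial (m, p)` and `r = Binomial (m + K, p̄)`. Both have mass one, so the
distance is `∑ⱼ (q j - r (j + K))⁺`. The choice of `p̄` means exactly `m (p̄ - p) = K (1 - p̄)`,
and the ratio `r (j + K) / q j` splits as `C(m+K, j+K) p̄ᴷ / C(m, j)` times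
`(p̄/p)ʲ ((1-p̄)/(1-p))^(m-j)`. For `j` within `t` of the mean `m p`, Bernoulli's inequality bounds
the first factor and `log x ≥ 1 - 1/x` the second, each from below by `1 - K (t + K) / (m p̄)`;
outside this window Chebyshev's inequality bounds the mass of `q` by `m p (1 - p) / t²`. Taking
`t = (m p̄)^(3/4)` makes the distance `O(K² (m p̄)^(-1/4))`, and `m p̄ ≥ n p - K → ∞`.
-/

open Filter
open scoped Topology

/-- The probability mass function of the `Binomial (m, p)` distribution:
`k ↦ C(m,k) p^k (1-p)^(m-k)` (which vanishes for `k > m`). -/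
noncomputable def binomialPmf (m : ℕ) (p : ℝ) (k : ℕ) : ℝ :=
  (m.choose k : ℝ) * p ^ k * (1 - p) ^ (m - k)

open Finset Polynomial
open scoped Nat

lemma binomialPmf_eq_eval_bernsteinPolynomial (m : ℕ) (p : ℝ) (k : ℕ) :
    binomialPmf m p k = (bernsteinPolynomial ℝ m k).eval p := by
  simp [binomialPmf, bernsteinPolynomial]

lemma binomialPmf_nonneg {p : ℝ} (hp₀ : 0 ≤ p) (hp₁ : p ≤ 1) (m k : ℕ) :
    0 ≤ binomialPmf m p k := by
  have : 0 ≤ 1 - p := sub_nonneg.2 hp₁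
  unfold binomialPmf
  positivity

lemma binomialPmf_eq_zero_of_lt {m k : ℕ} (h : m < k) (p : ℝ) : binomialPmf m p k = 0 := by
  simp [binomialPmf, Nat.choose_eq_zero_of_lt h]

lemma sum_binomialPmf (m : ℕ) (p : ℝ) : ∑ k ∈ range (m + 1), binomialPmf m p k = 1 := by
  simpa [binomialPmf_eq_eval_bernsteinPolynomial, eval_finsetSum] using
    congrArg (eval p) (bernsteinPolynomial.sum ℝ m)

lemma sum_sq_sub_mul_binomialPmf (m : ℕ) (p : ℝ) :
    ∑ k ∈ range (m + 1), (m * p - k) ^ 2 * binomialPmf m p k = m * p * (1 - p) := by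
  simpa [binomialPmf_eq_eval_bernsteinPolynomial, eval_finsetSum] using
    congrArg (eval p) (bernsteinPolynomial.variance ℝ m)

lemma half_sum_abs_sub_eq_sum_posPart {ι : Type*} {s : Finset ι} {f g : ι → ℝ}
    (h : ∑ i ∈ s, f i = ∑ i ∈ s, g i) :
    1 / 2 * ∑ i ∈ s, |f i - g i| = ∑ i ∈ s, (f i - g i)⁺ := by
  have hsum : ∑ i ∈ s, (f i - g i) = 0 := by rw [sum_sub_distrib, h, sub_self]
  have habs : ∀ i ∈ s, |f i - g i| = 2 * (f i - g i)⁺ - (f i - g i) := fun i _ => by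
    linarith [posPart_add_negPart (f i - g i), posPart_sub_negPart (f i - g i)]
  rw [sum_congr rfl habs, sum_sub_distrib, hsum, ← mul_sum]
  ring

lemma sum_range_add_eq_of_eq_zero {f : ℕ → ℝ} (K n : ℕ) (hf : ∀ x < K, f x = 0) :
    ∑ x ∈ range (K + n), f x = ∑ j ∈ range n, f (j + K) := by
  rw [sum_range_add, sum_eq_zero fun x hx => hf x (mem_range.1 hx), zero_add]
  simp only [add_comm K]

lemma half_tsum_abs_shift_sub_binomialPmf (K m : ℕ) (p : ℝ) {p' : ℝ} (hp'₀ : 0 ≤ p')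
    (hp'₁ : p' ≤ 1) :
    1 / 2 * ∑' x : ℕ, |(if K ≤ x then binomialPmf m p (x - K) else 0) -
        binomialPmf (m + K) p' x|
      = ∑ j ∈ range (m + 1), (binomialPmf m p j - binomialPmf (m + K) p' (j + K))⁺ := by
  set shift : ℕ → ℝ := fun x => if K ≤ x then binomialPmf m p (x - K) else 0
  have hshift : ∀ x < K, shift x = 0 := fun x hx => if_neg (not_le.2 hx)
  have hshift_add (j : ℕ) : shift (j + K) = binomialPmf m p j := by simp [shift]
  have hsupp : ∀ x ∉ range (K + (m + 1)), |shift x - binomialPmf (m + K) p' x| = 0 := by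
    intro x hx
    have hx : m + K < x := by simp at hx; omega
    simp [shift, binomialPmf_eq_zero_of_lt hx, binomialPmf_eq_zero_of_lt (by omega : m < x - K)]
  have hmass : ∑ x ∈ range (K + (m + 1)), shift x
      = ∑ x ∈ range (K + (m + 1)), binomialPmf (m + K) p' x := by
    rw [sum_range_add_eq_of_eq_zero K _ hshift, show K + (m + 1) = m + K + 1 by omega]
    simp only [hshift_add, sum_binomialPmf]
  rw [tsum_eq_sum hsupp, half_sum_abs_sub_eq_sum_posPart hmass,
    sum_range_add_eq_of_eq_zero K _ fun x hx => ?_]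
  · simp only [hshift_add]
  · simp [hshift x hx, binomialPmf_nonneg hp'₀ hp'₁]

lemma Nat.choose_mul_succ_pow_le {m j : ℕ} (hj : j ≤ m) (K : ℕ) :
    m.choose j * (m + 1) ^ K ≤ (m + K).choose (j + K) * (j + K) ^ K := by
  have hfac : 0 < j ! * (m - j)! := by positivity
  refine Nat.le_of_mul_le_mul_right ?_ hfac
  calc m.choose j * (m + 1) ^ K * (j ! * (m - j)!)
      = m ! * (m + 1) ^ K := by rw [← Nat.choose_mul_factorial_mul_factorial hj]; ring
    _ ≤ (m + K)! := Nat.factorial_mul_pow_le_factorial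
    _ = (m + K).choose (j + K) * (j ! * (j + K).descFactorial K) * (m - j)! := by
      rw [← Nat.choose_mul_factorial_mul_factorial (by omega : j + K ≤ m + K),
        ← Nat.factorial_mul_descFactorial (by omega : K ≤ j + K), Nat.add_sub_cancel,
        show m + K - (j + K) = m - j by omega]
    _ ≤ (m + K).choose (j + K) * (j ! * (j + K) ^ K) * (m - j)! := by
      gcongr; exact Nat.descFactorial_le_pow _ _
    _ = (m + K).choose (j + K) * (j + K) ^ K * (j ! * (m - j)!) := by ring

lemma one_sub_mul_add_pow_le_pow {μ t x : ℝ} (hμ : 0 < μ) (ht : 0 ≤ t) (hx₀ : 0 ≤ x)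
    (hx : x ≤ μ + t) (K : ℕ) : (1 - K * (t + K) / μ) * (x + K) ^ K ≤ μ ^ K := by
  set y := μ / (μ + t + K)
  have hden : 0 < μ + t + K := by positivity
  have hy : (x + K) * y ≤ μ := by
    rw [mul_div_assoc', div_le_iff₀ hden]; nlinarith
  have hbernoulli : 1 - K * (t + K) / μ ≤ y ^ K := by
    have hy₀ : 0 ≤ y := by positivity
    have h := one_add_mul_le_pow (by linarith : -2 ≤ y - 1) K
    have h1y : 1 - y = (t + K) / (μ + t + K) := by simp only [y]; field_simp; ring
    have : K * (1 - y) ≤ K * (t + K) / μ := by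
      rw [h1y, mul_div_assoc]; gcongr; linarith
    rw [add_sub_cancel] at h
    linarith
  calc (1 - K * (t + K) / μ) * (x + K) ^ K ≤ y ^ K * (x + K) ^ K := by gcongr
    _ = ((x + K) * y) ^ K := by rw [mul_pow, mul_comm]
    _ ≤ μ ^ K := by gcongr

lemma one_add_mul_one_sub_inv_le_pow_mul_pow {x y : ℝ} (hx : 0 < x) (hy : 0 < y) (a b : ℕ) :
    1 + a * (1 - x⁻¹) + b * (1 - y⁻¹) ≤ x ^ a * y ^ b := by
  calc 1 + a * (1 - x⁻¹) + b * (1 - y⁻¹)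
      ≤ 1 + a * Real.log x + b * Real.log y := by
        gcongr <;> exact Real.one_sub_inv_le_log_of_pos ‹_›
    _ ≤ Real.exp (a * Real.log x + b * Real.log y) := by
        linarith [Real.add_one_le_exp (a * Real.log x + b * Real.log y)]
    _ = x ^ a * y ^ b := by
        rw [Real.exp_add, ← Real.log_pow, ← Real.log_pow, Real.exp_log (by positivity),
          Real.exp_log (by positivity)]

lemma one_sub_mul_pow_mul_pow_le {m K j : ℕ} {p p' t : ℝ} (hp₀ : 0 < p) (hpp' : p ≤ p')
    (hp'₁ : p' < 1) (hm : 0 < m) (h : m * (p' - p) = K * (1 - p')) (hj : j ≤ m)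
    (hjt : m * p - t ≤ j) :
    (1 - K * (t + K) / (m * p')) * (p ^ j * (1 - p) ^ (m - j))
      ≤ p' ^ j * (1 - p') ^ (m - j) := by
  have h1p : 0 < 1 - p := by linarith
  have hp'₀ : 0 < p' := by linarith
  have h1p' : 0 < 1 - p' := by linarith
  have hm : (0 : ℝ) < m := by exact_mod_cast hm
  have hlog := one_add_mul_one_sub_inv_le_pow_mul_pow (div_pos hp'₀ hp₀) (div_pos h1p' h1p)
    j (m - j)
  rw [Nat.cast_sub hj, div_pow, div_pow] at hlog
  have hdefect : 1 - K * (t + K) / (m * p')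
      ≤ 1 + j * (1 - (p' / p)⁻¹) + (m - j) * (1 - ((1 - p') / (1 - p))⁻¹) := by
    have : 1 + j * (1 - (p' / p)⁻¹) + (m - j) * (1 - ((1 - p') / (1 - p))⁻¹)
        - (1 - K * (t + K) / (m * p')) = K * (t + K + j - m * p') / (m * p') := by
      have e₁ : 1 - (p' / p)⁻¹ = K * (1 - p') / (m * p') := by
        rw [inv_div, ← h]; field_simp
      have e₂ : 1 - ((1 - p') / (1 - p))⁻¹ = -(K / m) := by
        rw [inv_div]; field_simp; linear_combination -h
      rw [e₁, e₂]
      field_simp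
      ring
    have : 0 ≤ K * (t + K + j - m * p') / (m * p') := by
      apply div_nonneg _ (by positivity)
      apply mul_nonneg (by positivity)
      nlinarith
    linarith
  calc (1 - K * (t + K) / (m * p')) * (p ^ j * (1 - p) ^ (m - j))
      ≤ p' ^ j / p ^ j * ((1 - p') ^ (m - j) / (1 - p) ^ (m - j))
          * (p ^ j * (1 - p) ^ (m - j)) := by
        gcongr
        linarith
    _ = p' ^ j * (1 - p') ^ (m - j) := by field_simp

lemma one_sub_mul_binomialPmf_le {m K j : ℕ} {p p' t : ℝ} (hp₀ : 0 < p) (hpp' : p ≤ p')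
    (hp'₁ : p' < 1) (hm : 0 < m) (h : m * (p' - p) = K * (1 - p')) (ht : 0 ≤ t) (hj : j ≤ m)
    (hjt₁ : m * p - t ≤ j) (hjt₂ : j ≤ m * p + t) :
    (1 - 2 * (K * (t + K) / (m * p'))) * binomialPmf m p j
      ≤ binomialPmf (m + K) p' (j + K) := by
  set δ := K * (t + K) / (m * p')
  have hq := binomialPmf_nonneg hp₀.le (by linarith) m j
  rcases le_or_gt 1 δ with hδ | hδ
  · exact le_trans (mul_nonpos_of_nonpos_of_nonneg (by linarith) hq)
      (binomialPmf_nonneg (by linarith) hp'₁.le _ _)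
  have hpow : 0 < ((j : ℝ) + K) ^ K := by
    rcases K.eq_zero_or_pos with rfl | hK
    · simp
    · positivity
  have hp'₀ : 0 < p' := hp₀.trans_le hpp'
  have h1p : 0 ≤ 1 - p := by linarith
  have h1p' : 0 ≤ 1 - p' := by linarith
  have hmp' : 0 < (m : ℝ) * p' := mul_pos (Nat.cast_pos.2 hm) hp'₀
  have hchoose : (m.choose j : ℝ) * (m + 1) ^ K ≤ (m + K).choose (j + K) * (j + K) ^ K := by
    exact_mod_cast Nat.choose_mul_succ_pow_le hj K
  have hcentral := one_sub_mul_add_pow_le_pow hmp' ht (Nat.cast_nonneg j)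
    (by nlinarith) K
  have hweight := one_sub_mul_pow_mul_pow_le hp₀ hpp' hp'₁ hm h hj hjt₁
  refine le_of_mul_le_mul_right ?_ hpow
  calc (1 - 2 * δ) * binomialPmf m p j * (j + K) ^ K
      ≤ (1 - δ) ^ 2 * binomialPmf m p j * (j + K) ^ K := by gcongr; nlinarith [sq_nonneg δ]
    _ = m.choose j * ((1 - δ) * (j + K) ^ K) * ((1 - δ) * (p ^ j * (1 - p) ^ (m - j))) := by
      unfold binomialPmf; ring
    _ ≤ m.choose j * (m * p') ^ K * (p' ^ j * (1 - p') ^ (m - j)) := by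
      gcongr
    _ ≤ m.choose j * ((m + 1) * p') ^ K * (p' ^ j * (1 - p') ^ (m - j)) := by
      gcongr; linarith
    _ = m.choose j * (m + 1) ^ K * p' ^ K * (p' ^ j * (1 - p') ^ (m - j)) := by
      rw [mul_pow]; ring
    _ ≤ (m + K).choose (j + K) * (j + K) ^ K * p' ^ K * (p' ^ j * (1 - p') ^ (m - j)) := by
      gcongr
    _ = binomialPmf (m + K) p' (j + K) * (j + K) ^ K := by
      unfold binomialPmf
      rw [show m + K - (j + K) = m - j by omega]
      ring

lemma sum_posPart_sub_binomialPmf_le {m K : ℕ} {p p' t : ℝ} (hp₀ : 0 < p) (hpp' : p ≤ p')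
    (hp'₁ : p' < 1) (hm : 0 < m) (h : m * (p' - p) = K * (1 - p')) (ht : 0 < t) :
    ∑ j ∈ range (m + 1), (binomialPmf m p j - binomialPmf (m + K) p' (j + K))⁺
      ≤ 2 * (K * (t + K) / (m * p')) + m * p * (1 - p) / t ^ 2 := by
  set δ := K * (t + K) / (m * p')
  have hδ : 0 ≤ δ := by
    have : 0 < p' := hp₀.trans_le hpp'
    positivity
  have hterm : ∀ j ∈ range (m + 1), (binomialPmf m p j - binomialPmf (m + K) p' (j + K))⁺
      ≤ 2 * δ * binomialPmf m p j + (m * p - j) ^ 2 * binomialPmf m p j / t ^ 2 := by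
    intro j hj
    have hj : j ≤ m := Nat.lt_succ_iff.1 (mem_range.1 hj)
    have hq := binomialPmf_nonneg hp₀.le (by linarith) m j
    have hchebyshev : 0 ≤ (m * p - j) ^ 2 * binomialPmf m p j / t ^ 2 := by positivity
    refine sup_le ?_ (by positivity)
    by_cases hjt : m * p - t ≤ j ∧ j ≤ m * p + t
    · have := one_sub_mul_binomialPmf_le hp₀ hpp' hp'₁ hm h ht.le hj hjt.1 hjt.2
      linarith
    · have htail : t ^ 2 ≤ (m * p - j) ^ 2 := by
        rw [not_and_or, not_le, not_le] at hjt
        rcases hjt with hjt | hjt <;> nlinarith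
      have : binomialPmf m p j ≤ (m * p - j) ^ 2 * binomialPmf m p j / t ^ 2 := by
        rw [le_div_iff₀ (by positivity)]
        nlinarith
      have := binomialPmf_nonneg (by linarith) hp'₁.le (m + K) (j + K)
      nlinarith
  refine (sum_le_sum hterm).trans_eq ?_
  rw [sum_add_distrib, ← mul_sum, ← sum_div, sum_binomialPmf, sum_sq_sub_mul_binomialPmf, mul_one]

lemma le_and_lt_one_of_mul_sub_eq {m K : ℕ} {p p' : ℝ} (hm : 0 < m) (hp₁ : p < 1)
    (h : m * (p' - p) = K * (1 - p')) : p ≤ p' ∧ p' < 1 := by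
  have hm : (0 : ℝ) < m := by exact_mod_cast hm
  have hK : (0 : ℝ) ≤ K := K.cast_nonneg
  have hp'₁ : p' < 1 := by
    by_contra! hp'
    nlinarith [mul_pos hm (by linarith : 0 < p' - p)]
  refine ⟨?_, hp'₁⟩
  by_contra! hp'
  nlinarith [mul_pos hm (by linarith : 0 < p - p'), mul_nonneg hK (by linarith : 0 ≤ 1 - p')]

lemma natCast_add_mul_sub_le_mul {m K : ℕ} {p p' : ℝ} (hm : 0 < m) (hp₁ : p < 1)
    (h : m * (p' - p) = K * (1 - p')) : ((m + K : ℕ) : ℝ) * p - K ≤ m * p' := by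
  have hpp' := (le_and_lt_one_of_mul_sub_eq hm hp₁ h).1
  have hm : (0 : ℝ) ≤ m := m.cast_nonneg
  have hK : (0 : ℝ) ≤ K := K.cast_nonneg
  push_cast
  nlinarith [mul_le_mul_of_nonneg_left hpp' hm, mul_le_mul_of_nonneg_left hp₁.le hK]

lemma half_tsum_abs_shift_sub_binomialPmf_le {m K : ℕ} {p p' : ℝ} (hm : 0 < m)
    (hp : p ∈ Set.Ioo 0 1) (h : m * (p' - p) = K * (1 - p')) (hμ : 1 ≤ m * p') :
    1 / 2 * ∑' x : ℕ, |(if K ≤ x then binomialPmf m p (x - K) else 0) -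
        binomialPmf (m + K) p' x|
      ≤ (2 * K + 2 * K ^ 2 + 1) / (m * p') ^ (1 / 4 : ℝ) := by
  obtain ⟨hpp', hp'₁⟩ := le_and_lt_one_of_mul_sub_eq hm hp.2 h
  set r := (m * p') ^ (1 / 4 : ℝ)
  have hr : 1 ≤ r := Real.one_le_rpow hμ (by norm_num)
  have hr4 : r ^ 4 = m * p' := by
    rw [← Real.rpow_natCast, ← Real.rpow_mul (by linarith)]; norm_num
  have hvar : m * p * (1 - p) ≤ r ^ 4 := by
    rw [hr4]
    have : (0 : ℝ) ≤ m := m.cast_nonneg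
    nlinarith [hp.1, hp.2, mul_nonneg this hp.1.le]
  rw [half_tsum_abs_shift_sub_binomialPmf K m p (by linarith [hp.1]) hp'₁.le]
  calc _ ≤ 2 * (K * (r ^ 3 + K) / (m * p')) + m * p * (1 - p) / (r ^ 3) ^ 2 :=
        sum_posPart_sub_binomialPmf_le hp.1 hpp' hp'₁ hm h (by positivity)
    _ ≤ 2 * (K * (r ^ 3 + K) / r ^ 4) + r ^ 4 / (r ^ 3) ^ 2 := by
      rw [← hr4]; gcongr
    _ = (2 * K + 2 * K ^ 2 / r ^ 3 + 1 / r) / r := by field_simp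
    _ ≤ (2 * K + 2 * K ^ 2 + 1) / r := by
      gcongr
      · exact div_le_self (by positivity) (one_le_pow₀ hr)
      · exact div_le_one_of_le₀ hr (by linarith)

theorem dTV_shifted_binomial_tendsto_zero_general
    (K : ℕ) (p : ℕ → ℝ) (hp : ∀ n, p n ∈ Set.Ioo (0 : ℝ) 1)
    (hnp : Tendsto (fun n : ℕ => (n : ℝ) * p n) atTop atTop) :
    Tendsto (fun n : ℕ => (1 / 2 : ℝ) * ∑' x : ℕ,
        |(if K ≤ x then binomialPmf (n - K) (p n) (x - K) else 0) -
          binomialPmf n ((1 - (K : ℝ) / (n : ℝ)) * p n + (K : ℝ) / (n : ℝ)) x|)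
      atTop (𝓝 0) := by
  set pbar : ℕ → ℝ := fun n => (1 - (K : ℝ) / n) * p n + K / n
  have hrel (m : ℕ) (hm : 0 < m) :
      (m : ℝ) * (pbar (m + K) - p (m + K)) = K * (1 - pbar (m + K)) := by
    have : (0 : ℝ) < m + K := by positivity
    simp only [pbar]; push_cast; field_simp; ring
  set μ : ℕ → ℝ := fun n => ((n - K : ℕ) : ℝ) * pbar n
  have hμ : Tendsto μ atTop atTop := by
    refine tendsto_atTop_mono' _ ?_ (tendsto_atTop_add_const_right _ (-(K : ℝ)) hnp)
    filter_upwards [eventually_gt_atTop K] with n hn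
    obtain ⟨m, rfl⟩ : ∃ m, n = m + K := ⟨n - K, by omega⟩
    simpa only [μ, Nat.add_sub_cancel, ← sub_eq_add_neg] using
      natCast_add_mul_sub_le_mul (by omega) (hp _).2 (hrel m (by omega))
  have hbound : Tendsto (fun n => (2 * K + 2 * K ^ 2 + 1) / μ n ^ (1 / 4 : ℝ)) atTop (𝓝 0) :=
    tendsto_const_nhds.div_atTop ((tendsto_rpow_atTop (by norm_num)).comp hμ)
  refine squeeze_zero' (Eventually.of_forall fun n => ?_) ?_ hbound
  · exact mul_nonneg (by norm_num) (tsum_nonneg fun _ => abs_nonneg _)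
  · filter_upwards [eventually_gt_atTop K, hμ.eventually_ge_atTop 1] with n hn hμ1
    obtain ⟨m, rfl⟩ : ∃ m, n = m + K := ⟨n - K, by omega⟩
    simp only [μ, Nat.add_sub_cancel] at hμ1 ⊢
    exact half_tsum_abs_shift_sub_binomialPmf_le (by omega) (hp _) (hrel m (by omega)) hμ1

/-- Fix `K ≥ 0`. Let `p n ∈ (0,1)` with `n * p n → ∞` and `p n → 0`, and for
`n > K` set `p̄ n = (1 - K/n) * p n + K/n`. Then the total variation distance
`(1/2) ∑_x |Pr(K + B n = x) - Pr(Binomial (n, p̄ n) = x)|`, where `B n ~ Binomial (n - K, p n)`,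
tends to `0` as `n → ∞`. -/
theorem dTV_shifted_binomial_tendsto_zero
    (K : ℕ) (p : ℕ → ℝ) (hp : ∀ n, p n ∈ Set.Ioo (0 : ℝ) 1)
    (hnp : Tendsto (fun n : ℕ => (n : ℝ) * p n) atTop atTop)
    (hp0 : Tendsto p atTop (𝓝 0)) :
    Tendsto (fun n : ℕ => (1 / 2 : ℝ) * ∑' x : ℕ,
        |(if K ≤ x then binomialPmf (n - K) (p n) (x - K) else 0) -
          binomialPmf n ((1 - (K : ℝ) / (n : ℝ)) * p n + (K : ℝ) / (n : ℝ)) x|)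
      atTop (𝓝 0) :=
  dTV_shifted_binomial_tendsto_zero_general K p hp hnp
end

section
/- Let λ > 0 be a real, K ≥ 1 an integer, and N a Poisson(λ) random variable. Let x* be the least natural number x such that λ^K ≤ (x+1)(x+2)⋯(x+K). Then the total variation distance between the law of N + K and the law of N equals Pr(x* ≤ N ≤ x* + K − 1) = Pr(N ≥ x*) − Pr(N ≥ x* + K). -/
open Filter

/-- The probability mass function of the `Poisson (lam)` distribution:
`x ↦ exp (-lam) * lam^x / x!`. -/
noncomputable def poissonPmfR (lam : ℝ) (x : ℕ) : ℝ :=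
  Real.exp (-lam) * lam ^ x / (x.factorial : ℝ)

open Finset

/-!
The law of `N + K` has mass `p (x - K)` at `x ≥ K`, where `p` is the Poisson mass function. Since
`p (y + K) * (y+1)⋯(y+K) = p y * λ^K` and the product increases with `y`, the difference
`p x - p (x - K)` is positive exactly for `x < x* + K`. Both laws have total mass one, so
`d_TV = Σ_x (p x - p (x - K))⁺`, a finite sum over `x < x* + K`, which telescopes to
`Σ_{x < x* + K} p x - Σ_{x < x*} p x`, the mass of the window `[x*, x* + K)`.
-/

lemma tsum_abs_sub_eq_two_mul_tsum_posPart {ι : Type*} {f g : ι → ℝ} (hf : Summable f)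
    (hg : Summable g) (hfg : ∑' x, f x = ∑' x, g x) :
    ∑' x, |g x - f x| = 2 * ∑' x, (f x - g x)⁺ := by
  have two_posPart : ∀ x, 2 * (f x - g x)⁺ = |g x - f x| + (f x - g x) := fun x => by
    have := posPart_add_negPart (f x - g x)
    have := posPart_sub_negPart (f x - g x)
    rw [abs_sub_comm]
    linarith
  rw [← tsum_mul_left, tsum_congr two_posPart, (hg.sub hf).abs.tsum_add (hf.sub hg),
    hf.tsum_sub hg, hfg, sub_self, add_zero]

section Shift

variable {α : Type*} [AddCommMonoid α]

lemma sum_range_add_ite_le_sub (f : ℕ → α) (K n : ℕ) :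
    ∑ x ∈ range (K + n), (if K ≤ x then f (x - K) else 0) = ∑ x ∈ range n, f x := by
  rw [sum_range_add, sum_eq_zero fun x hx => if_neg (not_le.2 (mem_range.1 hx)), zero_add]
  simp

variable [TopologicalSpace α]

lemma tsum_ite_le_sub (f : ℕ → α) (K : ℕ) :
    ∑' x, (if K ≤ x then f (x - K) else 0) = ∑' x, f x := by
  rw [← (add_left_injective K).tsum_eq]
  · simp
  · intro x hx
    exact ⟨x - K, Nat.sub_add_cancel (not_lt.1 fun h => hx (if_neg h.not_ge))⟩

lemma summable_ite_le_sub {f : ℕ → α} (hf : Summable f) (K : ℕ) :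
    Summable fun x => if K ≤ x then f (x - K) else 0 := by
  rw [← (add_left_injective K).summable_iff]
  · simpa [Function.comp_def] using hf
  · rintro x hx
    rw [if_neg]
    exact fun h => hx ⟨x - K, Nat.sub_add_cancel h⟩

end Shift

lemma tsum_ite_le_eq_sub_sum_range {G : Type*} [AddCommGroup G] [TopologicalSpace G]
    [IsTopologicalAddGroup G] [T2Space G] {f : ℕ → G} (hf : Summable f) (n : ℕ) :
    ∑' x, (if n ≤ x then f x else 0) = ∑' x, f x - ∑ x ∈ range n, f x := by
  rw [eq_sub_iff_add_eq', ← hf.sum_add_tsum_nat_add n, ← (add_left_injective n).tsum_eq]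
  · simp
  · intro x hx
    exact ⟨x - n, Nat.sub_add_cancel (not_lt.1 fun h => hx (if_neg h.not_ge))⟩

lemma tsum_posPart_sub_ite_le_sub_eq_sum_Ico {f : ℕ → ℝ} (hf : ∀ x, 0 ≤ f x) {K s : ℕ}
    (hs : ∀ y, s ≤ y ↔ f (y + K) ≤ f y) :
    ∑' x, (f x - if K ≤ x then f (x - K) else 0)⁺ = ∑ x ∈ Ico s (s + K), f x := by
  have h_far : ∀ x ∉ range (K + s), (f x - if K ≤ x then f (x - K) else 0)⁺ = 0 := by
    intro x hx
    have hKx : K + s ≤ x := not_lt.1 (mt mem_range.2 hx)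
    have hdecr := (hs (x - K)).1 (by omega)
    rw [Nat.sub_add_cancel (by omega)] at hdecr
    rw [if_pos (by omega), posPart_eq_zero]
    linarith
  have h_near : ∀ x ∈ range (K + s),
      (f x - if K ≤ x then f (x - K) else 0)⁺ = f x - if K ≤ x then f (x - K) else 0 := by
    intro x hx
    rw [posPart_eq_self]
    split_ifs with hKx
    · have hincr := mt (hs (x - K)).2 (by have := mem_range.1 hx; omega)
      rw [Nat.sub_add_cancel hKx] at hincr
      linarith
    · linarith [hf x]
  rw [tsum_eq_sum h_far, sum_congr rfl h_near, sum_sub_distrib, sum_range_add_ite_le_sub,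
    add_comm K s, sum_Ico_eq_sub _ (Nat.le_add_right s K)]

open Nat in
lemma cast_factorial_add_eq_mul_prod (y K : ℕ) :
    ((y + K)! : ℝ) = y ! * ∏ i ∈ Icc 1 K, ((y : ℝ) + i) := by
  induction K with
  | zero => simp
  | succ k ih =>
    rw [prod_Icc_succ_top (Nat.le_add_left 1 k), ← mul_assoc, ← ih, ← Nat.add_assoc,
      Nat.factorial_succ]
    push_cast
    ring

section Poisson

variable {lam : ℝ}

lemma poissonPmfR_pos (hlam : 0 < lam) (x : ℕ) : 0 < poissonPmfR lam x := by
  unfold poissonPmfR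
  positivity

lemma summable_poissonPmfR (lam : ℝ) : Summable (poissonPmfR lam) := by
  refine ((Real.summable_pow_div_factorial lam).mul_left (Real.exp (-lam))).congr fun x => ?_
  rw [poissonPmfR, mul_div_assoc]

lemma poissonPmfR_add_mul_prod (lam : ℝ) (y K : ℕ) :
    poissonPmfR lam (y + K) * ∏ i ∈ Icc 1 K, ((y : ℝ) + i) = poissonPmfR lam y * lam ^ K := by
  have hprod : ∏ i ∈ Icc 1 K, ((y : ℝ) + i) ≠ 0 := by
    rw [← mul_ne_zero_iff_left (Nat.cast_ne_zero.2 y.factorial_ne_zero),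
      ← cast_factorial_add_eq_mul_prod]
    exact Nat.cast_ne_zero.2 (Nat.factorial_ne_zero _)
  unfold poissonPmfR
  rw [cast_factorial_add_eq_mul_prod, pow_add]
  field_simp

lemma poissonPmfR_add_le_iff (hlam : 0 < lam) (y K : ℕ) :
    poissonPmfR lam (y + K) ≤ poissonPmfR lam y ↔ lam ^ K ≤ ∏ i ∈ Icc 1 K, ((y : ℝ) + i) := by
  have hprod : 0 < ∏ i ∈ Icc 1 K, ((y : ℝ) + i) :=
    prod_pos fun i hi => by have := (mem_Icc.1 hi).1; positivity
  rw [← mul_le_mul_iff_left₀ hprod, poissonPmfR_add_mul_prod,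
    mul_le_mul_iff_right₀ (poissonPmfR_pos hlam y)]

lemma sInf_pow_le_prod_le_iff (hlam : 0 ≤ lam) (K y : ℕ) :
    sInf {x : ℕ | lam ^ K ≤ ∏ i ∈ Icc 1 K, ((x : ℝ) + i)} ≤ y ↔
      lam ^ K ≤ ∏ i ∈ Icc 1 K, ((y : ℝ) + i) := by
  have hmono : Monotone fun x : ℕ => ∏ i ∈ Icc 1 K, ((x : ℝ) + i) := fun x x' hx => by
    dsimp only
    gcongr
  have hne : {x : ℕ | lam ^ K ≤ ∏ i ∈ Icc 1 K, ((x : ℝ) + i)}.Nonempty := by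
    refine ⟨⌈lam⌉₊, ?_⟩
    calc lam ^ K = ∏ _i ∈ Icc 1 K, lam := by simp
      _ ≤ ∏ i ∈ Icc 1 K, ((⌈lam⌉₊ : ℝ) + i) :=
        prod_le_prod (fun _ _ => hlam) fun i _ => by
          linarith [Nat.le_ceil lam, i.cast_nonneg (α := ℝ)]
  exact ⟨fun h => (Nat.sInf_mem hne).trans (hmono h), fun h => Nat.sInf_le h⟩

end Poisson

theorem dTV_poisson_shift_eq_window_general
    (lam : ℝ) (hlam : 0 < lam) (K : ℕ) :
    ((1 / 2 : ℝ) * ∑' x : ℕ,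
        |(if K ≤ x then poissonPmfR lam (x - K) else 0) - poissonPmfR lam x| =
      ∑ x ∈ Finset.Ico (sInf {x : ℕ | lam ^ K ≤ ∏ i ∈ Finset.Icc 1 K, ((x : ℝ) + (i : ℝ))})
          (sInf {x : ℕ | lam ^ K ≤ ∏ i ∈ Finset.Icc 1 K, ((x : ℝ) + (i : ℝ))} + K),
        poissonPmfR lam x) ∧
    ((∑ x ∈ Finset.Ico (sInf {x : ℕ | lam ^ K ≤ ∏ i ∈ Finset.Icc 1 K, ((x : ℝ) + (i : ℝ))})
          (sInf {x : ℕ | lam ^ K ≤ ∏ i ∈ Finset.Icc 1 K, ((x : ℝ) + (i : ℝ))} + K),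
        poissonPmfR lam x) =
      (∑' x : ℕ, if sInf {x : ℕ | lam ^ K ≤ ∏ i ∈ Finset.Icc 1 K, ((x : ℝ) + (i : ℝ))} ≤ x then
          poissonPmfR lam x else 0) -
      ∑' x : ℕ, if sInf {x : ℕ | lam ^ K ≤ ∏ i ∈ Finset.Icc 1 K, ((x : ℝ) + (i : ℝ))} + K ≤ x then
          poissonPmfR lam x else 0) := by
  set s := sInf {x : ℕ | lam ^ K ≤ ∏ i ∈ Icc 1 K, ((x : ℝ) + i)}
  have hs : ∀ y, s ≤ y ↔ poissonPmfR lam (y + K) ≤ poissonPmfR lam y := fun y =>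
    (sInf_pow_le_prod_le_iff hlam.le K y).trans (poissonPmfR_add_le_iff hlam y K).symm
  have hp := summable_poissonPmfR lam
  constructor
  · rw [tsum_abs_sub_eq_two_mul_tsum_posPart hp (summable_ite_le_sub hp K)
      (tsum_ite_le_sub _ K).symm,
      tsum_posPart_sub_ite_le_sub_eq_sum_Ico (fun x => (poissonPmfR_pos hlam x).le) hs]
    ring
  · rw [tsum_ite_le_eq_sub_sum_range hp, tsum_ite_le_eq_sub_sum_range hp,
      sum_Ico_eq_sub _ (Nat.le_add_right s K)]
    ring

/-- Let `lam > 0`, `K ≥ 1`, and `N ~ Poisson (lam)`. Let `x*` be the least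
natural number `x` with `lam^K ≤ (x+1)(x+2)⋯(x+K)`. Then the total variation distance between
the law of `N + K` and the law of `N` equals `Pr (x* ≤ N ≤ x* + K - 1)`, which in turn equals
`Pr (N ≥ x*) - Pr (N ≥ x* + K)`. -/
theorem dTV_poisson_shift_eq_window
    (lam : ℝ) (hlam : 0 < lam) (K : ℕ) (hK : 1 ≤ K) :
    ((1 / 2 : ℝ) * ∑' x : ℕ,
        |(if K ≤ x then poissonPmfR lam (x - K) else 0) - poissonPmfR lam x| =
      ∑ x ∈ Finset.Ico (sInf {x : ℕ | lam ^ K ≤ ∏ i ∈ Finset.Icc 1 K, ((x : ℝ) + (i : ℝ))})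
          (sInf {x : ℕ | lam ^ K ≤ ∏ i ∈ Finset.Icc 1 K, ((x : ℝ) + (i : ℝ))} + K),
        poissonPmfR lam x) ∧
    ((∑ x ∈ Finset.Ico (sInf {x : ℕ | lam ^ K ≤ ∏ i ∈ Finset.Icc 1 K, ((x : ℝ) + (i : ℝ))})
          (sInf {x : ℕ | lam ^ K ≤ ∏ i ∈ Finset.Icc 1 K, ((x : ℝ) + (i : ℝ))} + K),
        poissonPmfR lam x) =
      (∑' x : ℕ, if sInf {x : ℕ | lam ^ K ≤ ∏ i ∈ Finset.Icc 1 K, ((x : ℝ) + (i : ℝ))} ≤ x then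
          poissonPmfR lam x else 0) -
      ∑' x : ℕ, if sInf {x : ℕ | lam ^ K ≤ ∏ i ∈ Finset.Icc 1 K, ((x : ℝ) + (i : ℝ))} + K ≤ x then
          poissonPmfR lam x else 0) :=
  dTV_poisson_shift_eq_window_general lam hlam K
end

section
/- Let λ > 0 be a real, K ≥ 0 an integer, and N a Poisson(λ) random variable. Then the total variation distance between the law of N + K and the law of N is at most K · sup_{x ∈ ℕ} Pr(N = x). -/
open Filter

/-!
Shifting by `K` is `K` successive unit shifts, so by the triangle inequality the `ℓ¹` distance
between `p` and its `K`-shift is at most `K` times that of a unit shift. For a sequence that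
increases up to a mode `m` and then decreases to `0`, the `ℓ¹` distance of a unit shift
telescopes to `2 * p m`. The Poisson pmf is such a sequence with mode `⌊λ⌋`, because
`p (k + 1) / p k = λ / (k + 1)`.
-/

open Finset Topology

/-- `natShift K f` is the pmf of `N + K` when `f` is the pmf of `N`. -/
def natShift {M : Type*} [Zero M] (K : ℕ) (f : ℕ → M) (x : ℕ) : M :=
  if K ≤ x then f (x - K) else 0

section natShift

variable {E : Type*}

@[simp]
lemma natShift_zero [Zero E] (f : ℕ → E) : natShift 0 f = f := by
  ext x
  simp [natShift]

@[simp]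
lemma natShift_add_apply [Zero E] (j : ℕ) (f : ℕ → E) (x : ℕ) : natShift j f (x + j) = f x := by
  simp [natShift]

lemma natShift_succ [Zero E] (j : ℕ) (f : ℕ → E) :
    natShift (j + 1) f = natShift j (natShift 1 f) := by
  ext x
  unfold natShift
  split_ifs <;> first | omega | rfl

lemma natShift_sub [AddGroup E] (j : ℕ) (f g : ℕ → E) :
    natShift j (f - g) = natShift j f - natShift j g := by
  ext x
  simp only [natShift, Pi.sub_apply]
  split_ifs <;> simp

lemma norm_natShift [SeminormedAddGroup E] (j : ℕ) (f : ℕ → E) (x : ℕ) :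
    ‖natShift j f x‖ = natShift j (fun y ↦ ‖f y‖) x := by
  unfold natShift
  split_ifs <;> simp

lemma hasSum_natShift_iff [AddCommMonoid E] [TopologicalSpace E] {j : ℕ} {f : ℕ → E} {a : E} :
    HasSum (natShift j f) a ↔ HasSum f a := by
  rw [← (add_left_injective j).hasSum_iff]
  · simp only [Function.comp_def, natShift_add_apply]
  · intro x hx
    have hxj : ¬ j ≤ x := fun h ↦ hx ⟨x - j, Nat.sub_add_cancel h⟩
    simp [natShift, hxj]

lemma norm_natShift_sub_le_sum [SeminormedAddCommGroup E] (K : ℕ) (f : ℕ → E) (x : ℕ) :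
    ‖natShift K f x - f x‖ ≤ ∑ j ∈ range K, natShift j (fun y ↦ ‖natShift 1 f y - f y‖) x := by
  have htel : natShift K f x - f x = ∑ j ∈ range K, natShift j (natShift 1 f - f) x := by
    have hsum := sum_range_sub (fun j ↦ natShift j f x) K
    rw [natShift_zero] at hsum
    rw [← hsum]
    refine sum_congr rfl fun j _ ↦ ?_
    rw [natShift_succ, natShift_sub, Pi.sub_apply]
  rw [htel]
  refine (norm_sum_le _ _).trans_eq ?_
  simp only [norm_natShift, Pi.sub_apply]

theorem tsum_norm_natShift_sub_le [SeminormedAddCommGroup E] (K : ℕ) {f : ℕ → E}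
    (hf : Summable fun x ↦ ‖natShift 1 f x - f x‖) :
    ∑' x, ‖natShift K f x - f x‖ ≤ K * ∑' x, ‖natShift 1 f x - f x‖ := by
  have hshifts : HasSum (fun x ↦ ∑ j ∈ range K, natShift j (fun y ↦ ‖natShift 1 f y - f y‖) x)
      (K * ∑' x, ‖natShift 1 f x - f x‖) := by
    simpa using hasSum_sum (s := range K) fun j _ ↦ hasSum_natShift_iff.2 hf.hasSum
  rw [← hshifts.tsum_eq]
  exact Summable.tsum_le_tsum (norm_natShift_sub_le_sum K f)
    (hshifts.summable.of_nonneg_of_le (fun _ ↦ norm_nonneg _) (norm_natShift_sub_le_sum K f))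
    hshifts.summable

end natShift

section unimodal

variable {p : ℕ → ℝ} {m : ℕ}

lemma sum_range_abs_sub_of_unimodal (hmono : MonotoneOn p (Set.Iic m))
    (hanti : AntitoneOn p (Set.Ici m)) {n : ℕ} (hn : m ≤ n) :
    ∑ k ∈ range n, |p k - p (k + 1)| = 2 * p m - p 0 - p n := by
  have hup : ∑ k ∈ range m, |p k - p (k + 1)| = p m - p 0 := by
    rw [← sum_range_sub]
    refine sum_congr rfl fun k hk ↦ ?_
    have hk : k + 1 ≤ m := mem_range.1 hk
    have hstep := hmono (Set.mem_Iic.2 (by omega)) (Set.mem_Iic.2 hk) k.le_succ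
    rw [abs_sub_comm, abs_of_nonneg (sub_nonneg.2 hstep)]
  have hdown : ∑ k ∈ Ico m n, |p k - p (k + 1)| = p m - p n := by
    rw [← neg_sub, ← sum_Ico_sub p hn, ← sum_neg_distrib]
    refine sum_congr rfl fun k hk ↦ ?_
    have hk : m ≤ k := (mem_Ico.1 hk).1
    have hstep := hanti (Set.mem_Ici.2 hk) (Set.mem_Ici.2 (by omega)) k.le_succ
    rw [neg_sub, abs_of_nonneg (sub_nonneg.2 hstep)]
  rw [← sum_range_add_sum_Ico _ hn, hup, hdown]
  ring

theorem hasSum_abs_natShift_one_sub_of_unimodal (h0 : 0 ≤ p 0) (hmono : MonotoneOn p (Set.Iic m))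
    (hanti : AntitoneOn p (Set.Ici m)) (hlim : Tendsto p atTop (𝓝 0)) :
    HasSum (fun x ↦ |natShift 1 p x - p x|) (2 * p m) := by
  rw [← hasSum_nat_add_iff' 1]
  simp only [sum_range_one, natShift, nonpos_iff_eq_zero, one_ne_zero, if_false, zero_sub,
    abs_neg, abs_of_nonneg h0]
  rw [hasSum_iff_tendsto_nat_of_nonneg (fun _ ↦ abs_nonneg _)]
  have hpartial : Tendsto (fun n ↦ 2 * p m - p 0 - p n) atTop (𝓝 (2 * p m - p 0)) := by
    simpa using tendsto_const_nhds.sub hlim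
  refine hpartial.congr' ?_
  filter_upwards [eventually_ge_atTop m] with n hn
  exact (sum_range_abs_sub_of_unimodal hmono hanti hn).symm

end unimodal

section poisson

variable {lam : ℝ}

lemma poissonPmfR_succ (k : ℕ) :
    poissonPmfR lam (k + 1) = poissonPmfR lam k * (lam / (k + 1)) := by
  simp only [poissonPmfR, pow_succ, Nat.factorial_succ]
  push_cast
  field_simp

lemma poissonPmfR_nonneg (hlam : 0 ≤ lam) (x : ℕ) : 0 ≤ poissonPmfR lam x := by
  unfold poissonPmfR
  positivity

lemma hasSum_poissonPmfR (hlam : 0 ≤ lam) : HasSum (poissonPmfR lam) 1 := by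
  have h := ProbabilityTheory.hasSum_one_poissonMeasure lam.toNNReal
  rwa [Real.coe_toNNReal _ hlam] at h

lemma poissonPmfR_le_succ (hlam : 0 ≤ lam) {k : ℕ} (hk : (k : ℝ) + 1 ≤ lam) :
    poissonPmfR lam k ≤ poissonPmfR lam (k + 1) := by
  rw [poissonPmfR_succ]
  exact le_mul_of_one_le_right (poissonPmfR_nonneg hlam k) ((one_le_div (by positivity)).2 hk)

lemma poissonPmfR_succ_le (hlam : 0 ≤ lam) {k : ℕ} (hk : lam ≤ (k : ℝ) + 1) :
    poissonPmfR lam (k + 1) ≤ poissonPmfR lam k := by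
  rw [poissonPmfR_succ]
  exact mul_le_of_le_one_right (poissonPmfR_nonneg hlam k) ((div_le_one (by positivity)).2 hk)

lemma monotoneOn_poissonPmfR (hlam : 0 ≤ lam) :
    MonotoneOn (poissonPmfR lam) (Set.Iic ⌊lam⌋₊) := by
  refine monotoneOn_of_le_succ Set.ordConnected_Iic fun k _ _ hk ↦ ?_
  rw [Order.succ_eq_add_one, Set.mem_Iic, Nat.le_floor_iff hlam] at hk
  exact poissonPmfR_le_succ hlam (by exact_mod_cast hk)

lemma antitoneOn_poissonPmfR (hlam : 0 ≤ lam) :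
    AntitoneOn (poissonPmfR lam) (Set.Ici ⌊lam⌋₊) := by
  refine antitoneOn_of_succ_le Set.ordConnected_Ici fun k _ hk _ ↦ ?_
  rw [Set.mem_Ici] at hk
  refine poissonPmfR_succ_le hlam ((Nat.lt_floor_add_one lam).le.trans ?_)
  exact_mod_cast Nat.succ_le_succ hk

end poisson

/-- Let `lam > 0`, `K ≥ 0`, and `N ~ Poisson (lam)`. The total variation
distance between the law of `N + K` and the law of `N` is at most
`K * sup_{x ∈ ℕ} Pr (N = x)`. -/
theorem dTV_poisson_shift_le_mode_bound
    (lam : ℝ) (hlam : 0 < lam) (K : ℕ) :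
    (1 / 2 : ℝ) * ∑' x : ℕ,
        |(if K ≤ x then poissonPmfR lam (x - K) else 0) - poissonPmfR lam x| ≤
      (K : ℝ) * ⨆ x : ℕ, poissonPmfR lam x := by
  set p := poissonPmfR lam
  have hp := hasSum_poissonPmfR hlam.le
  have hstep : HasSum (fun x ↦ |natShift 1 p x - p x|) (2 * p ⌊lam⌋₊) :=
    hasSum_abs_natShift_one_sub_of_unimodal (poissonPmfR_nonneg hlam.le 0)
      (monotoneOn_poissonPmfR hlam.le) (antitoneOn_poissonPmfR hlam.le)
      hp.summable.tendsto_atTop_zero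
  have hshift := tsum_norm_natShift_sub_le K (f := p) (by simpa using hstep.summable)
  simp only [Real.norm_eq_abs, hstep.tsum_eq] at hshift
  have hmode : p ⌊lam⌋₊ ≤ ⨆ x, p x :=
    le_ciSup ⟨1, Set.forall_mem_range.2 fun x ↦
      le_hasSum hp x fun j _ ↦ poissonPmfR_nonneg hlam.le j⟩ _
  calc (1 / 2 : ℝ) * ∑' x, |natShift K p x - p x|
      ≤ 1 / 2 * (K * (2 * p ⌊lam⌋₊)) := by gcongr
    _ = K * p ⌊lam⌋₊ := by ring
    _ ≤ K * ⨆ x, p x := by gcongr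
end

section
/- Fix an integer K ≥ 0. Let (p_n) ⊂ (0,1) be a sequence with n·p_n → ∞. Then n·[(1 − p_n)·ln(1 − K/n) + p_n·ln(1 + (1/p_n − 1)·K/n)] → 0 as n → ∞ (over n > K). -/
/-!
With `u = p (n - K)` one has `1 + (1/p - 1) K/n = (1 - K/n)(1 + K/u)`, so the expression splits as
`n log (1 - K/n) + n/(n - K) · u log (1 + K/u)`. Since `n → ∞` and `u ≥ n p - K → ∞`, the standard
limit `x log (1 + t/x) → t` sends the two terms to `-K` and `1 · K`.
-/

open Filter Real
open scoped Topology

theorem one_add_inv_sub_one_mul_div_eq_mul {K x p : ℝ} (hp : p ≠ 0) (hx : x ≠ 0)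
    (hxK : x - K ≠ 0) :
    1 + (1 / p - 1) * K / x = (1 - K / x) * (1 + K / (p * (x - K))) := by
  field_simp
  ring

theorem mul_log_combination_eq {K x p : ℝ} (hK : 0 ≤ K) (hKx : K < x) (hp : 0 < p) :
    x * ((1 - p) * log (1 - K / x) + p * log (1 + (1 / p - 1) * K / x)) =
      x * log (1 - K / x) + x / (x - K) * (p * (x - K) * log (1 + K / (p * (x - K)))) := by
  have hx : 0 < x := hK.trans_lt hKx
  have hxK : 0 < x - K := sub_pos.2 hKx
  have hfirst : 0 < 1 - K / x := by rwa [sub_pos, div_lt_one hx]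
  have hsecond : 0 < 1 + K / (p * (x - K)) := by positivity
  rw [one_add_inv_sub_one_mul_div_eq_mul hp.ne' hx.ne' hxK.ne', log_mul hfirst.ne' hsecond.ne']
  field_simp
  ring

/-- Fix `K ≥ 0`. Let `p n ∈ (0,1)` with `n * p n → ∞`. Then
`n * ((1 - p n) * ln (1 - K/n) + p n * ln (1 + (1/(p n) - 1) * K/n)) → 0` as `n → ∞`. -/
theorem n_mul_log_combination_tendsto_zero
    (K : ℕ) (p : ℕ → ℝ) (hp : ∀ n, p n ∈ Set.Ioo (0 : ℝ) 1)
    (hnp : Tendsto (fun n : ℕ => (n : ℝ) * p n) atTop atTop) :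
    Tendsto (fun n : ℕ => (n : ℝ) *
        ((1 - p n) * Real.log (1 - (K : ℝ) / (n : ℝ)) +
          p n * Real.log (1 + (1 / p n - 1) * (K : ℝ) / (n : ℝ)))) atTop (𝓝 0) := by
  have hu : Tendsto (fun n : ℕ => p n * ((n : ℝ) - K)) atTop atTop := by
    refine tendsto_atTop_mono (fun n => ?_) (tendsto_atTop_add_const_right _ (-(K : ℝ)) hnp)
    nlinarith [(hp n).2, (K.cast_nonneg : (0 : ℝ) ≤ K)]
  have hlim := ((tendsto_mul_log_one_add_div_atTop (-(K : ℝ))).comp tendsto_natCast_atTop_atTop).add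
    ((tendsto_natCast_div_add_atTop (-(K : ℝ))).mul ((tendsto_mul_log_one_add_div_atTop K).comp hu))
  rw [one_mul, neg_add_cancel] at hlim
  refine hlim.congr' ?_
  filter_upwards [eventually_gt_atTop K] with n hn
  rw [mul_log_combination_eq K.cast_nonneg (by exact_mod_cast hn) (hp n).1]
  simp only [Function.comp_apply, neg_div, ← sub_eq_add_neg]
end

section
/- Let n ≥ 1 and r ≥ 1 be integers, K an integer with 0 ≤ K < n, and p = (p_0, …, p_r) a probability vector with p_r > 0. Define the probability vector p̄ by p̄_ℓ = (1 − K/n)·p_ℓ for 0 ≤ ℓ ≤ r−1 and p̄_r = (1 − K/n)·p_r + K/n. Then the Kullback–Leibler divergence satisfies D_KL(Multinomial(n; p) ‖ Multinomial(n; p̄)) = −n·[(1 − p_r)·ln(1 − K/n) + p_r·ln(1 + (1/p_r − 1)·K/n)]. -/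
/-- The probability mass function of `Multinomial (n; p)` on count vectors `k : Fin d → ℕ`. -/
noncomputable def multinomialPmf {d : ℕ} (n : ℕ) (p : Fin d → ℝ) (k : Fin d → ℕ) : ℝ :=
  if (∑ ℓ, k ℓ) = n then
    (n.factorial : ℝ) * ∏ ℓ, p ℓ ^ (k ℓ) / ((k ℓ).factorial : ℝ)
  else 0

/-!
At a count vector `k` with `∑ ℓ, k ℓ = n` the multinomial coefficients cancel, so the
log-likelihood ratio `log (Mult(n; p) k / Mult(n; q) k) = ∑ ℓ, k ℓ * log (p ℓ / q ℓ)` is linear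
in `k`. Since `k ℓ` has mean `n * p ℓ` under `Mult(n; p)`, the divergence is `n` times the
divergence `∑ ℓ, p ℓ * log (p ℓ / q ℓ)` of the categorical distributions. For the planted `q`,
`p ℓ / q ℓ = (1 - K/n)⁻¹` off the last coordinate, which gives the closed form.
-/

open Finset Real

section Multinomial

variable {d : ℕ}

theorem hasSum_multinomialPmf (n : ℕ) (p : Fin d → ℝ) :
    HasSum (multinomialPmf n p) ((∑ i, p i) ^ n) := by
  have hsupp : HasSum (multinomialPmf n p) (∑ k ∈ piAntidiag univ n, multinomialPmf n p k) :=
    hasSum_sum_of_ne_finset_zero fun k hk => if_neg (by simpa using hk)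
  convert hsupp using 1
  rw [sum_pow_eq_sum_piAntidiag]
  refine sum_congr rfl fun k hk => ?_
  rw [mem_piAntidiag] at hk
  have hfac : (n.factorial : ℝ) = (∏ i, ((k i).factorial : ℝ)) * Nat.multinomial univ k := by
    rw [← hk.1]
    exact_mod_cast (Nat.multinomial_spec univ k).symm
  have hfac_ne : (∏ i, ((k i).factorial : ℝ)) ≠ 0 := by positivity
  rw [multinomialPmf, if_pos hk.1, hfac, prod_div_distrib]
  field_simp

theorem multinomialPmf_update_succ_mul (n : ℕ) (p : Fin d → ℝ) (k : Fin d → ℕ) (ℓ : Fin d) :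
    multinomialPmf (n + 1) p (Function.update k ℓ (k ℓ + 1)) * ((k ℓ + 1 : ℕ) : ℝ) =
      (n + 1) * p ℓ * multinomialPmf n p k := by
  have hsum : ∑ i, Function.update k ℓ (k ℓ + 1) i = ∑ i, k i + 1 := by
    rw [sum_update_of_mem (mem_univ ℓ), ← add_sum_erase univ k (mem_univ ℓ),
      sdiff_singleton_eq_erase]
    ring
  have hprod (m : Fin d → ℕ) : ∏ i, p i ^ m i / ((m i).factorial : ℝ) =
      p ℓ ^ m ℓ / ((m ℓ).factorial : ℝ) *
        ∏ i ∈ univ \ {ℓ}, p i ^ m i / ((m i).factorial : ℝ) :=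
    prod_eq_mul_prod_sdiff_singleton ℓ _ (by simp)
  have hrest : ∏ i ∈ univ \ {ℓ}, p i ^ Function.update k ℓ (k ℓ + 1) i /
      ((Function.update k ℓ (k ℓ + 1) i).factorial : ℝ) =
      ∏ i ∈ univ \ {ℓ}, p i ^ k i / ((k i).factorial : ℝ) :=
    prod_congr rfl fun i hi => by rw [Function.update_of_ne (by simpa using hi)]
  unfold multinomialPmf
  rw [hsum]
  by_cases hk : ∑ i, k i = n
  · rw [if_pos (by rw [hk]), if_pos hk, hprod, hprod k, hrest, Function.update_self]
    push_cast [Nat.factorial_succ]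
    field_simp
    ring
  · simp [hk]

theorem hasSum_multinomialPmf_mul_apply (n : ℕ) (p : Fin d → ℝ) (ℓ : Fin d) :
    HasSum (fun k => multinomialPmf n p k * k ℓ) (n * p ℓ * (∑ i, p i) ^ (n - 1)) := by
  cases n with
  | zero =>
    have hzero (k : Fin d → ℕ) : multinomialPmf 0 p k * k ℓ = 0 := by
      by_cases hk : ∑ i, k i = 0
      · simp [(sum_eq_zero_iff.mp hk) ℓ (mem_univ ℓ)]
      · simp [multinomialPmf, hk]
    simpa using (hasSum_zero (α := ℝ)).congr_fun hzero
  | succ n =>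
    -- raising `k ℓ` by one is a bijection onto the count vectors with `k ℓ ≠ 0`
    set g : (Fin d → ℕ) → (Fin d → ℕ) := fun k => Function.update k ℓ (k ℓ + 1)
    have hg : Function.Injective g := by
      intro k k' h
      funext i
      have hi := congrFun h i
      by_cases hiℓ : i = ℓ
      · subst hiℓ; simpa [g] using hi
      · simpa [g, hiℓ] using hi
    have hrange : ∀ k ∉ Set.range g, multinomialPmf (n + 1) p k * k ℓ = 0 := by
      intro k hk
      suffices k ℓ = 0 by simp [this]
      by_contra h
      exact hk ⟨Function.update k ℓ (k ℓ - 1), by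
        simp only [g, Function.update_self, Function.update_idem]
        rw [Nat.sub_add_cancel (Nat.pos_of_ne_zero h), Function.update_eq_self]⟩
    rw [← hg.hasSum_iff hrange, Nat.add_sub_cancel, Nat.cast_succ]
    exact ((hasSum_multinomialPmf n p).mul_left _).congr_fun fun k => by
      simpa [g] using multinomialPmf_update_succ_mul n p k ℓ

theorem apply_ne_zero_of_multinomialPmf_ne_zero {n : ℕ} {p : Fin d → ℝ} {k : Fin d → ℕ}
    (h : multinomialPmf n p k ≠ 0) {i : Fin d} (hi : k i ≠ 0) : p i ≠ 0 := by
  contrapose! h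
  unfold multinomialPmf
  split_ifs
  · exact mul_eq_zero_of_right _ (prod_eq_zero (mem_univ i) (by simp [h, hi]))
  · rfl

theorem multinomialPmf_div_multinomialPmf {n : ℕ} {k : Fin d → ℕ} (hk : ∑ i, k i = n)
    (p q : Fin d → ℝ) :
    multinomialPmf n p k / multinomialPmf n q k = ∏ i, (p i / q i) ^ k i := by
  rw [multinomialPmf, multinomialPmf, if_pos hk, if_pos hk,
    mul_div_mul_left _ _ (by positivity), ← prod_div_distrib]
  refine prod_congr rfl fun i _ => ?_
  rw [div_div_div_cancel_right₀ (by positivity), div_pow]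

theorem multinomialPmf_mul_log_div {n : ℕ} {p q : Fin d → ℝ} (hq : ∀ i, p i ≠ 0 → q i ≠ 0)
    (k : Fin d → ℕ) :
    multinomialPmf n p k * log (multinomialPmf n p k / multinomialPmf n q k) =
      ∑ i, log (p i / q i) * (multinomialPmf n p k * k i) := by
  by_cases hP : multinomialPmf n p k = 0
  · simp [hP]
  have hk : ∑ i, k i = n := by
    by_contra h
    exact hP (if_neg h)
  have hpow : ∀ i, (p i / q i) ^ k i ≠ 0 := by
    intro i
    rcases eq_or_ne (k i) 0 with hi | hi
    · simp [hi]
    · have hpi := apply_ne_zero_of_multinomialPmf_ne_zero hP hi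
      exact pow_ne_zero _ (div_ne_zero hpi (hq i hpi))
  rw [multinomialPmf_div_multinomialPmf hk, log_prod fun i _ => hpow i, mul_sum]
  refine sum_congr rfl fun i _ => ?_
  rw [log_pow]
  ring

theorem hasSum_multinomialPmf_mul_log_div (n : ℕ) {p q : Fin d → ℝ}
    (hq : ∀ i, p i ≠ 0 → q i ≠ 0) :
    HasSum (fun k => multinomialPmf n p k * log (multinomialPmf n p k / multinomialPmf n q k))
      (n * (∑ i, p i) ^ (n - 1) * ∑ i, p i * log (p i / q i)) := by
  have h := hasSum_sum fun i (_ : i ∈ univ) =>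
    (hasSum_multinomialPmf_mul_apply n p i).mul_left (log (p i / q i))
  have hval : n * (∑ i, p i) ^ (n - 1) * ∑ i, p i * log (p i / q i) =
      ∑ i, log (p i / q i) * (n * p i * (∑ i, p i) ^ (n - 1)) := by
    rw [mul_sum]
    exact sum_congr rfl fun i _ => by ring
  rw [hval]
  exact h.congr_fun (multinomialPmf_mul_log_div hq)

end Multinomial

theorem sum_mul_log_div_planted {ι : Type*} [Fintype ι] [DecidableEq ι] {p : ι → ℝ}
    (hp : ∑ i, p i = 1) (j : ι) (s : ℝ) :
    ∑ i, p i * log (p i / ((1 - s) * p i + if i = j then s else 0)) =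
      -((1 - p j) * log (1 - s) + p j * log (1 + (1 / p j - 1) * s)) := by
  have hrest : ∑ i ∈ univ.erase j, p i = 1 - p j := by
    rw [← hp, ← add_sum_erase _ _ (mem_univ j)]
    ring
  have hoff : ∀ i ∈ univ.erase j,
      p i * log (p i / ((1 - s) * p i + if i = j then s else 0)) = -(p i * log (1 - s)) := by
    intro i hi
    rw [if_neg (ne_of_mem_erase hi), add_zero]
    rcases eq_or_ne (p i) 0 with h | h
    · simp [h]
    · rw [div_mul_cancel_right₀ h, log_inv, mul_neg]
  have hon : p j * log (p j / ((1 - s) * p j + s)) = -(p j * log (1 + (1 / p j - 1) * s)) := by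
    rcases eq_or_ne (p j) 0 with h | h
    · simp [h]
    · rw [← mul_neg, ← log_inv]
      congr 2
      field_simp
      ring
  rw [← add_sum_erase _ _ (mem_univ j), sum_congr rfl hoff, if_pos rfl, hon, sum_neg_distrib,
    ← sum_mul, hrest]
  ring

theorem klDiv_multinomial_planted_eq_general
    (n r : ℕ) (K : ℕ) (hK : K < n)
    (p : Fin (r + 1) → ℝ) (hp1 : (∑ ℓ, p ℓ) = 1)
    (hpr : 0 < p (Fin.last r)) :
    (∑' k : Fin (r + 1) → ℕ,
        multinomialPmf n p k *
          Real.log (multinomialPmf n p k /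
            multinomialPmf n
              (fun ℓ => (1 - (K : ℝ) / (n : ℝ)) * p ℓ +
                (if ℓ = Fin.last r then (K : ℝ) / (n : ℝ) else 0)) k)) =
      -(n : ℝ) * ((1 - p (Fin.last r)) * Real.log (1 - (K : ℝ) / (n : ℝ)) +
        p (Fin.last r) *
          Real.log (1 + (1 / p (Fin.last r) - 1) * (K : ℝ) / (n : ℝ))) := by
  have ht : 0 < 1 - (K : ℝ) / n :=
    sub_pos.mpr ((div_lt_one (by exact_mod_cast K.zero_le.trans_lt hK)).mpr (by exact_mod_cast hK))
  have hq : ∀ ℓ, p ℓ ≠ 0 →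
      (1 - (K : ℝ) / n) * p ℓ + (if ℓ = Fin.last r then (K : ℝ) / n else 0) ≠ 0 := by
    intro ℓ hℓ
    split_ifs with h
    · subst h
      exact (add_pos_of_pos_of_nonneg (mul_pos ht hpr) (by positivity : (0 : ℝ) ≤ K / n)).ne'
    · simpa using ⟨ht.ne', hℓ⟩
  rw [(hasSum_multinomialPmf_mul_log_div n hq).tsum_eq, hp1, one_pow, mul_one,
    sum_mul_log_div_planted hp1, mul_div_assoc]
  ring

/-- Let `n ≥ 1`, `r ≥ 1`, `0 ≤ K < n`, and let `p = (p_0, …, p_r)` be a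
probability vector with `p_r > 0`. Define `p̄` by `p̄_ℓ = (1 - K/n) p_ℓ` for `ℓ < r` and
`p̄_r = (1 - K/n) p_r + K/n`. Then
`D_KL(Multinomial (n; p) ‖ Multinomial (n; p̄)) = -n ((1 - p_r) ln (1 - K/n) + p_r ln (1 + (1/p_r - 1) K/n))`,
where `D_KL(P ‖ Q) = ∑_k P k * ln (P k / Q k)`. -/
theorem klDiv_multinomial_planted_eq
    (n r : ℕ) (hn : 1 ≤ n) (hr : 1 ≤ r) (K : ℕ) (hK : K < n)
    (p : Fin (r + 1) → ℝ) (hp0 : ∀ ℓ, 0 ≤ p ℓ) (hp1 : (∑ ℓ, p ℓ) = 1)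
    (hpr : 0 < p (Fin.last r)) :
    (∑' k : Fin (r + 1) → ℕ,
        multinomialPmf n p k *
          Real.log (multinomialPmf n p k /
            multinomialPmf n
              (fun ℓ => (1 - (K : ℝ) / (n : ℝ)) * p ℓ +
                (if ℓ = Fin.last r then (K : ℝ) / (n : ℝ) else 0)) k)) =
      -(n : ℝ) * ((1 - p (Fin.last r)) * Real.log (1 - (K : ℝ) / (n : ℝ)) +
        p (Fin.last r) *
          Real.log (1 + (1 / p (Fin.last r) - 1) * (K : ℝ) / (n : ℝ))) :=
  klDiv_multinomial_planted_eq_general n r K hK p hp1 hpr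
end
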